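/- arXiv:1307.6501 — 11 statements merged into one kernel-verified Lean document; each statement's English description precedes it below -/
import Mathlib

section
/- Let q : ℝ → ℝ be nondecreasing and positive, let ρ ≤ 0, and let g be a positive function with g(y)/q(y) → 0 as y → ∞, such that (q(yλ) − q(y))/g(y) → h_ρ(λ) for all λ > 0, where h_ρ(λ) = (λ^ρ − 1)/ρ for ρ ≠ 0 and h₀(λ) = log λ. Then with f(y) := g(y)/q(y), one has (log q(yλ) − log q(y))/f(y) → h_ρ(λ) for all λ > 0. -/
open Filter Real

noncomputable def h (ρ lam : ℝ) : ℝ := if ρ = 0 then Real.log lam else (lam ^ ρ - 1) / ρ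

/-!
With `t := (q(yλ) - q(y))/q(y) = ((q(yλ) - q(y))/g(y)) · (g(y)/q(y)) → 0`, one has
`log q(yλ) - log q(y) = log (1 + t) = t · (1 + o(1))`, so dividing by `g/q` recovers the
ERV quotient `(q(yλ) - q(y))/g(y)` up to a factor tending to `1`.
-/

open Topology

lemma mul_dslope_log_one_add (x : ℝ) :
    x * dslope (fun x => log (1 + x)) 0 x = log (1 + x) := by
  simpa using sub_smul_dslope (fun x => log (1 + x)) 0 x

lemma tendsto_dslope_log_one_add_zero :
    Tendsto (dslope (fun x => log (1 + x)) 0) (𝓝 0) (𝓝 1) := by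
  have hderiv : HasDerivAt (fun x => log (1 + x)) 1 0 := by
    simpa using ((hasDerivAt_id (0 : ℝ)).const_add 1).log (by norm_num)
  have hcont := continuousAt_dslope_same.mpr hderiv.differentiableAt
  simpa [ContinuousAt, dslope_same, hderiv.deriv] using hcont

lemma tendsto_log_sub_log_div_of_tendsto_sub_div {α : Type*} {l : Filter α} {P Q G : α → ℝ}
    {A : ℝ} (hP : ∀ᶠ y in l, 0 < P y) (hQ : ∀ᶠ y in l, 0 < Q y)
    (hGQ : Tendsto (fun y => G y / Q y) l (𝓝 0))
    (hA : Tendsto (fun y => (P y - Q y) / G y) l (𝓝 A)) :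
    Tendsto (fun y => (log (P y) - log (Q y)) / (G y / Q y)) l (𝓝 A) := by
  set L := dslope (fun x : ℝ => log (1 + x)) 0
  set u := fun y => (P y - Q y) / G y
  have hL : Tendsto (fun y => L (u y * (G y / Q y))) l (𝓝 1) := by
    refine tendsto_dslope_log_one_add_zero.comp ?_
    simpa using hA.mul hGQ
  have key : ∀ᶠ y in l,
      u y * L (u y * (G y / Q y)) = (log (P y) - log (Q y)) / (G y / Q y) := by
    filter_upwards [hP, hQ] with y hPy hQy
    rcases eq_or_ne (G y) 0 with hG | hG
    · simp [u, hG] -- both sides are `0`, by `x / 0 = 0`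
    have hlog : log (P y) - log (Q y) = u y * (G y / Q y) * L (u y * (G y / Q y)) := by
      rw [mul_dslope_log_one_add, ← log_div hPy.ne' hQy.ne']
      congr 1
      simp only [u]
      field_simp
      ring
    rw [hlog, mul_right_comm, mul_div_cancel_right₀ _ (div_ne_zero hG hQy.ne')]
  simpa using (hA.mul hL).congr' key

theorem stmt2_general (q g : ℝ → ℝ) (ρ : ℝ)
    (hqpos : ∀ᶠ y in atTop, 0 < q y)
    (hgq : Tendsto (fun y => g y / q y) atTop (nhds 0))
    (hERV : ∀ l : ℝ, 0 < l →
      Tendsto (fun y => (q (y * l) - q y) / g y) atTop (nhds (h ρ l))) :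
    ∀ l : ℝ, 0 < l →
      Tendsto (fun y => (Real.log (q (y * l)) - Real.log (q y)) / (g y / q y))
        atTop (nhds (h ρ l)) := by
  intro l hl
  have hql : ∀ᶠ y in atTop, 0 < q (y * l) :=
    (tendsto_id.atTop_mul_const hl).eventually hqpos
  exact tendsto_log_sub_log_div_of_tendsto_sub_div hql hqpos hgq (hERV l hl)

theorem stmt2 (q g : ℝ → ℝ) (ρ : ℝ) (hρ : ρ ≤ 0)
    (hmono : Monotone q)
    (hqpos : ∀ᶠ y in atTop, 0 < q y)
    (hgpos : ∀ y, 0 < g y)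
    (hgq : Tendsto (fun y => g y / q y) atTop (nhds 0))
    (hERV : ∀ l : ℝ, 0 < l →
      Tendsto (fun y => (q (y * l) - q y) / g y) atTop (nhds (h ρ l))) :
    ∀ l : ℝ, 0 < l →
      Tendsto (fun y => (Real.log (q (y * l)) - Real.log (q y)) / (g y / q y))
        atTop (nhds (h ρ l)) :=
  stmt2_general q g ρ hqpos hgq hERV
end

section
/- Let q : ℝ → ℝ be nondecreasing and positive with ρ < 0, and suppose (log q(yλ) − log q(y))/f(y) → h_ρ(λ) for all λ > 0 for some positive function f. Then f(y) → 0 as y → ∞, and (q(yλ) − q(y))/(f(y) q(y)) → h_ρ(λ) for all λ > 0, i.e., q ∈ ERV with the same negative index ρ and auxiliary function f·q. -/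
open Filter Real

/-!
Write `L = log q`. Since `h ρ 4 - h ρ 2 = 2 ^ ρ * h ρ 2` with `2 ^ ρ < 1`, the increments
`L (2y) - L y` eventually shrink by a factor `c < 1` at each doubling of `y`, so `L` converges
along `Y * 2 ^ n`, and by monotonicity `q` converges to a positive limit. Hence every increment
`L (y l) - L y` tends to `0`. This forces `f → 0`, because the increments divided by `f` tend to
`h ρ 2 ≠ 0`, and it gives `q (y l) / q y - 1 = exp (L (y l) - L y) - 1 ~ L (y l) - L y`.
-/

open Topology Asymptotics

lemma h_mul (ρ : ℝ) {a b : ℝ} (ha : 0 < a) (hb : 0 < b) :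
    h ρ (a * b) = h ρ a + a ^ ρ * h ρ b := by
  rcases eq_or_ne ρ 0 with rfl | hρ
  · simp [h, log_mul ha.ne' hb.ne']
  · simp only [h, if_neg hρ, mul_rpow ha.le hb.le]
    field_simp
    ring

lemma h_pos_of_one_lt (ρ : ℝ) {l : ℝ} (hl : 1 < l) : 0 < h ρ l := by
  rcases lt_trichotomy ρ 0 with hρ | rfl | hρ
  · rw [h, if_neg hρ.ne]
    exact div_pos_of_neg_of_neg (sub_neg.2 (rpow_lt_one_of_one_lt_of_neg hl hρ)) hρ
  · simpa [h] using log_pos hl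
  · rw [h, if_neg hρ.ne']
    exact div_pos (sub_pos.2 (one_lt_rpow hl hρ)) hρ

lemma eventually_sub_comp_two_mul_le {L f : ℝ → ℝ} {ρ c : ℝ} (hf : ∀ y, 0 < f y)
    (hc : 2 ^ ρ < c)
    (h2 : Tendsto (fun y => (L (y * 2) - L y) / f y) atTop (𝓝 (h ρ 2)))
    (h4 : Tendsto (fun y => (L (y * 4) - L y) / f y) atTop (𝓝 (h ρ 4))) :
    ∀ᶠ y in atTop, L (y * 2 * 2) - L (y * 2) ≤ c * (L (y * 2) - L y) := by
  have h42 : h ρ 4 - h ρ 2 = 2 ^ ρ * h ρ 2 := by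
    rw [show (4 : ℝ) = 2 * 2 by norm_num, h_mul ρ two_pos two_pos]
    ring
  have hlt : 2 ^ ρ * h ρ 2 < c * h ρ 2 :=
    mul_lt_mul_of_pos_right hc (h_pos_of_one_lt ρ one_lt_two)
  have hsub := h4.sub h2
  rw [h42] at hsub
  filter_upwards [hsub.eventually_lt (h2.const_mul c) hlt] with y hy
  rw [← sub_div, div_lt_iff₀ (hf y), mul_assoc, div_mul_cancel₀ _ (hf y).ne'] at hy
  rw [mul_assoc, show (2 : ℝ) * 2 = 4 by norm_num]
  linarith

lemma eventually_cauchySeq_comp_mul_two_pow {L : ℝ → ℝ} {c : ℝ} (hc0 : 0 ≤ c) (hc1 : c < 1)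
    (hmono : ∀ᶠ y in atTop, L y ≤ L (y * 2))
    (hcontr : ∀ᶠ y in atTop, L (y * 2 * 2) - L (y * 2) ≤ c * (L (y * 2) - L y)) :
    ∀ᶠ Y in atTop, CauchySeq fun n : ℕ => L (Y * 2 ^ n) := by
  obtain ⟨N, hN⟩ := eventually_atTop.1 (hmono.and hcontr)
  filter_upwards [eventually_ge_atTop (max N 0)] with Y hY
  have hYn (n : ℕ) : N ≤ Y * 2 ^ n :=
    (le_of_max_le_left hY).trans (le_mul_of_one_le_right (le_of_max_le_right hY)
      (one_le_pow₀ one_le_two))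
  have hdecay (n : ℕ) : L (Y * 2 ^ n * 2) - L (Y * 2 ^ n) ≤ c ^ n * (L (Y * 2) - L Y) := by
    induction n with
    | zero => simp
    | succ n ih =>
      calc L (Y * 2 ^ (n + 1) * 2) - L (Y * 2 ^ (n + 1))
          = L (Y * 2 ^ n * 2 * 2) - L (Y * 2 ^ n * 2) := by rw [pow_succ, ← mul_assoc]
        _ ≤ c * (L (Y * 2 ^ n * 2) - L (Y * 2 ^ n)) := (hN _ (hYn n)).2
        _ ≤ c * (c ^ n * (L (Y * 2) - L Y)) := mul_le_mul_of_nonneg_left ih hc0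
        _ = c ^ (n + 1) * (L (Y * 2) - L Y) := by ring
  refine cauchySeq_of_le_geometric c (L (Y * 2) - L Y) hc1 fun n => ?_
  rw [dist_comm, Real.dist_eq, pow_succ, ← mul_assoc,
    abs_of_nonneg (sub_nonneg.2 (hN _ (hYn n)).1), mul_comm (L (Y * 2) - L Y)]
  exact hdecay n

lemma exists_tendsto_log_of_logERV_neg {q f : ℝ → ℝ} {ρ : ℝ} (hρ : ρ < 0) (hmono : Monotone q)
    (hqpos : ∀ᶠ y in atTop, 0 < q y) (hfpos : ∀ y, 0 < f y)
    (h2 : Tendsto (fun y => (log (q (y * 2)) - log (q y)) / f y) atTop (𝓝 (h ρ 2)))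
    (h4 : Tendsto (fun y => (log (q (y * 4)) - log (q y)) / f y) atTop (𝓝 (h ρ 4))) :
    ∃ a, Tendsto (fun y => log (q y)) atTop (𝓝 a) := by
  obtain ⟨c, hρc, hc1⟩ := exists_between (rpow_lt_one_of_one_lt_of_neg one_lt_two hρ)
  have hc0 : 0 ≤ c := (rpow_pos_of_pos two_pos ρ).le.trans hρc.le
  have hlog_mono : ∀ᶠ y in atTop, log (q y) ≤ log (q (y * 2)) := by
    filter_upwards [hqpos, eventually_ge_atTop 0] with y hy hy0
    exact log_le_log hy (hmono (by linarith))
  have hcontr := eventually_sub_comp_two_mul_le (L := fun y => log (q y)) hfpos hρc h2 h4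
  have hcauchy := eventually_cauchySeq_comp_mul_two_pow hc0 hc1 hlog_mono hcontr
  obtain ⟨Y, hY, hY0⟩ := (hcauchy.and (eventually_gt_atTop 0)).exists
  obtain ⟨a, ha⟩ := cauchySeq_tendsto_of_complete hY
  have hφ : Tendsto (fun n : ℕ => Y * 2 ^ n) atTop atTop :=
    (tendsto_pow_atTop_atTop_of_one_lt one_lt_two).const_mul_atTop hY0
  have hq : Tendsto q atTop (𝓝 (exp a)) := by
    rw [tendsto_iff_tendsto_subseq_of_monotone hmono hφ]
    refine ((continuous_exp.tendsto a).comp ha).congr' ?_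
    filter_upwards [hφ.eventually hqpos] with n hn
    exact exp_log hn
  refine ⟨a, ?_⟩
  have := (continuousAt_log (exp_pos a).ne').tendsto.comp hq
  rwa [log_exp] at this

lemma Real.isEquivalent_exp_sub_one : (fun x => exp x - 1) ~[𝓝 0] id := by
  exact (hasDerivAt_exp 0).isLittleO.congr (fun x => by simp) (fun x => by simp)

lemma tendsto_exp_sub_one_div {α : Type*} {l : Filter α} {u v : α → ℝ} {a : ℝ}
    (hu : Tendsto u l (𝓝 0)) (huv : Tendsto (fun y => u y / v y) l (𝓝 a)) :
    Tendsto (fun y => (exp (u y) - 1) / v y) l (𝓝 a) :=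
  ((isEquivalent_exp_sub_one.comp_tendsto hu).div IsEquivalent.refl).tendsto_nhds_iff.2 huv

lemma tendsto_zero_of_tendsto_div {α : Type*} {l : Filter α} {u v : α → ℝ} {a : ℝ}
    (hu : Tendsto u l (𝓝 0)) (huv : Tendsto (fun y => u y / v y) l (𝓝 a)) (ha : a ≠ 0) :
    Tendsto v l (𝓝 0) := by
  have := hu.div huv ha
  rw [zero_div] at this
  refine this.congr' ?_
  filter_upwards [huv.eventually_ne ha] with y hy
  have hu0 : u y ≠ 0 := fun h0 => hy (by simp [h0])
  simp only [Pi.div_apply]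
  field_simp

lemma Filter.Tendsto.sub_comp_mul {L : ℝ → ℝ} {a l : ℝ} (hL : Tendsto L atTop (𝓝 a))
    (hl : 0 < l) :
    Tendsto (fun y => L (y * l) - L y) atTop (𝓝 0) := by
  simpa using (hL.comp (tendsto_id.atTop_mul_const hl)).sub hL

theorem stmt3 (q f : ℝ → ℝ) (ρ : ℝ) (hρ : ρ < 0)
    (hmono : Monotone q)
    (hqpos : ∀ᶠ y in atTop, 0 < q y)
    (hfpos : ∀ y, 0 < f y)
    (hERV : ∀ l : ℝ, 0 < l →
      Tendsto (fun y => (Real.log (q (y * l)) - Real.log (q y)) / f y)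
        atTop (nhds (h ρ l))) :
    Tendsto f atTop (nhds 0) ∧
    ∀ l : ℝ, 0 < l →
      Tendsto (fun y => (q (y * l) - q y) / (f y * q y)) atTop (nhds (h ρ l)) := by
  obtain ⟨a, hlog⟩ :=
    exists_tendsto_log_of_logERV_neg hρ hmono hqpos hfpos (hERV 2 two_pos) (hERV 4 four_pos)
  refine ⟨tendsto_zero_of_tendsto_div (hlog.sub_comp_mul two_pos) (hERV 2 two_pos)
    (h_pos_of_one_lt ρ one_lt_two).ne', fun l hl => ?_⟩
  refine (tendsto_exp_sub_one_div (hlog.sub_comp_mul hl) (hERV l hl)).congr' ?_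
  have hmul : Tendsto (fun y => y * l) atTop atTop := tendsto_id.atTop_mul_const hl
  filter_upwards [hqpos, hmul.eventually hqpos] with y hy hyl
  rw [exp_sub, exp_log hyl, exp_log hy]
  field_simp
end

section
/- Suppose U : ℝ → ℝ is nondecreasing with lim U = ∞, and both U and q := U ∘ exp belong to ERV: there exist reals γ, ρ and positive functions w, g with (U(tλ)−U(t))/w(t) → h_γ(λ) and (q(yλ)−q(y))/g(y) → h_ρ(λ) for all λ > 0. Then γ = 0. -/
/-!
Comparing the ERV limits at `λ = 2` and `λ = 4` shows that the dyadic increments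
`U (x * 2 ^ (k + 1)) - U (x * 2 ^ k)` eventually grow geometrically, with any ratio slightly
above or below `2 ^ γ`. If `γ < 0` they are summable, so `U` stays bounded along `x * 2 ^ n`,
contradicting `U → ∞`. If `γ > 0`, `U` grows at least like a power, so `U (exp y)` grows
exponentially in `y`; but the same estimate applied to `q = U ∘ exp` bounds `q` by a power of `y`.
-/

open Filter Real

open Finset Topology

lemma h_two_pos (γ : ℝ) : 0 < h γ 2 := by
  unfold h
  split_ifs with hγ
  · exact log_pos one_lt_two
  · rcases lt_or_gt_of_ne hγ with hneg | hpos
    · exact div_pos_of_neg_of_neg (by linarith [rpow_lt_one_of_one_lt_of_neg one_lt_two hneg]) hneg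
    · exact div_pos (by linarith [one_lt_rpow one_lt_two hpos]) hpos

lemma h_four_sub_h_two (γ : ℝ) : h γ 4 - h γ 2 = 2 ^ γ * h γ 2 := by
  have h4 : (4 : ℝ) = 2 * 2 := by norm_num
  unfold h
  split_ifs with hγ
  · rw [hγ, rpow_zero, h4, log_mul two_ne_zero two_ne_zero]
    ring
  · rw [h4, mul_rpow zero_le_two zero_le_two]
    field_simp
    ring

lemma eventually_lt_of_tendsto_div {α : Type*} {l : Filter α} {a b w : α → ℝ} {A B : ℝ}
    (hw : ∀ t, 0 < w t) (ha : Tendsto (fun t => a t / w t) l (𝓝 A))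
    (hb : Tendsto (fun t => b t / w t) l (𝓝 B)) (hAB : A < B) : ∀ᶠ t in l, a t < b t := by
  filter_upwards [ha.eventually_lt hb hAB] with t ht
  exact (div_lt_div_iff_of_pos_right (hw t)).1 ht

def IsERV (U w : ℝ → ℝ) (γ : ℝ) : Prop :=
  (∀ t, 0 < w t) ∧ ∀ l : ℝ, 0 < l → Tendsto (fun t => (U (t * l) - U t) / w t) atTop (𝓝 (h γ l))

lemma eventually_forall_mul_two_pow {P : ℝ → Prop} (hP : ∀ᶠ s in atTop, P s) :
    ∀ᶠ x in atTop, ∀ i : ℕ, P (x * 2 ^ i) := by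
  obtain ⟨T, hT⟩ := eventually_atTop.1 hP
  filter_upwards [eventually_ge_atTop (max T 0)] with x hx i
  exact hT _ ((le_max_left _ _).trans (hx.trans
    (le_mul_of_one_le_right ((le_max_right _ _).trans hx) (one_le_pow₀ one_le_two))))

section Dyadic

variable {F : ℝ → ℝ} {θ : ℝ}

lemma eventually_dyadic_incr_le_geom (hθ : 0 ≤ θ)
    (hF : ∀ᶠ s in atTop, F (s * 4) - F (s * 2) ≤ θ * (F (s * 2) - F s)) :
    ∀ᶠ x in atTop, ∀ k : ℕ, F (x * 2 ^ (k + 1)) - F (x * 2 ^ k) ≤ θ ^ k * (F (x * 2) - F x) := by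
  filter_upwards [eventually_forall_mul_two_pow hF] with x hx k
  simpa using le_geom (u := fun k => F (x * 2 ^ (k + 1)) - F (x * 2 ^ k)) hθ k fun i _ => by
    have hi := hx i
    rwa [show x * 2 ^ i * 4 = x * 2 ^ (i + 1 + 1) by ring,
      show x * 2 ^ i * 2 = x * 2 ^ (i + 1) by ring] at hi

lemma eventually_geom_le_dyadic_incr (hθ : 0 ≤ θ)
    (hF : ∀ᶠ s in atTop, θ * (F (s * 2) - F s) ≤ F (s * 4) - F (s * 2)) :
    ∀ᶠ x in atTop, ∀ k : ℕ, θ ^ k * (F (x * 2) - F x) ≤ F (x * 2 ^ (k + 1)) - F (x * 2 ^ k) := by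
  filter_upwards [eventually_forall_mul_two_pow hF] with x hx k
  simpa using geom_le (u := fun k => F (x * 2 ^ (k + 1)) - F (x * 2 ^ k)) hθ k fun i _ => by
    have hi := hx i
    rwa [show x * 2 ^ i * 4 = x * 2 ^ (i + 1 + 1) by ring,
      show x * 2 ^ i * 2 = x * 2 ^ (i + 1) by ring] at hi

lemma sub_eq_sum_dyadic_incr (x : ℝ) (n : ℕ) :
    F (x * 2 ^ n) - F x = ∑ k ∈ range n, (F (x * 2 ^ (k + 1)) - F (x * 2 ^ k)) := by
  rw [sum_range_sub (fun k => F (x * 2 ^ k)), pow_zero, mul_one]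

end Dyadic

lemma exists_pow_mul_lt_pow_two_pow {θ Δ : ℝ} (hθ : 1 < θ) (hΔ : 0 < Δ) (j : ℕ) (C : ℝ) :
    ∃ n : ℕ, ((2 : ℝ) ^ n) ^ j * C < θ ^ 2 ^ n * Δ := by
  have h0 : Tendsto (fun N : ℕ => (N : ℝ) ^ j / θ ^ N * C) atTop (𝓝 0) := by
    simpa using (tendsto_pow_const_div_const_pow_of_one_lt j hθ).mul_const C
  obtain ⟨n, hn⟩ := ((tendsto_pow_atTop_atTop_of_one_lt one_lt_two).eventually
    (h0.eventually (gt_mem_nhds hΔ))).exists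
  refine ⟨n, ?_⟩
  push_cast at hn
  rwa [div_mul_eq_mul_div, div_lt_iff₀ (by positivity), mul_comm Δ] at hn

lemma exp_mul_two_pow_le {y : ℝ} (hy : 2 ≤ y) (n : ℕ) :
    exp y * 2 ^ (2 ^ n + 1) ≤ exp (y * 2 ^ (n + 1)) := by
  have h2n : (1 : ℝ) ≤ 2 ^ n := one_le_pow₀ one_le_two
  calc exp y * 2 ^ (2 ^ n + 1) ≤ exp y * exp 1 ^ (2 ^ n + 1) := by
        gcongr
        linarith [exp_one_gt_d9]
    _ = exp (y + (2 ^ n + 1)) := by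
        rw [← exp_nat_mul, ← exp_add]
        push_cast
        ring_nf
    _ ≤ exp (y * 2 ^ (n + 1)) := exp_le_exp.2 (by rw [pow_succ]; nlinarith)

namespace IsERV

variable {U w : ℝ → ℝ} {γ θ : ℝ}

lemma tendsto_incr_four_two (hU : IsERV U w γ) :
    Tendsto (fun t => (U (t * 4) - U (t * 2)) / w t) atTop (𝓝 (2 ^ γ * h γ 2)) := by
  rw [← h_four_sub_h_two]
  exact ((hU.2 4 four_pos).sub (hU.2 2 two_pos)).congr fun t => by ring

lemma tendsto_const_mul_incr_two (hU : IsERV U w γ) (θ : ℝ) :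
    Tendsto (fun t => θ * (U (t * 2) - U t) / w t) atTop (𝓝 (θ * h γ 2)) := by
  simpa only [mul_div_assoc] using (hU.2 2 two_pos).const_mul θ

lemma eventually_dyadic_incr_pos (hU : IsERV U w γ) : ∀ᶠ t in atTop, 0 < U (t * 2) - U t :=
  eventually_lt_of_tendsto_div hU.1 (by simp) (hU.2 2 two_pos) (h_two_pos γ)

lemma eventually_dyadic_incr_le_geom (hU : IsERV U w γ) (hθ : 2 ^ γ < θ) :
    ∀ᶠ x in atTop, ∀ k : ℕ, U (x * 2 ^ (k + 1)) - U (x * 2 ^ k) ≤ θ ^ k * (U (x * 2) - U x) :=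
  _root_.eventually_dyadic_incr_le_geom ((rpow_pos_of_pos two_pos γ).le.trans hθ.le) <|
    (eventually_lt_of_tendsto_div hU.1 hU.tendsto_incr_four_two (hU.tendsto_const_mul_incr_two θ)
      (mul_lt_mul_of_pos_right hθ (h_two_pos γ))).mono fun _ ht => ht.le

lemma eventually_geom_le_dyadic_incr (hU : IsERV U w γ) (hθ₀ : 0 ≤ θ) (hθ : θ < 2 ^ γ) :
    ∀ᶠ x in atTop, ∀ k : ℕ, θ ^ k * (U (x * 2) - U x) ≤ U (x * 2 ^ (k + 1)) - U (x * 2 ^ k) :=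
  _root_.eventually_geom_le_dyadic_incr hθ₀ <|
    (eventually_lt_of_tendsto_div hU.1 (hU.tendsto_const_mul_incr_two θ) hU.tendsto_incr_four_two
      (mul_lt_mul_of_pos_right hθ (h_two_pos γ))).mono fun _ ht => ht.le

lemma not_tendsto_atTop_of_neg (hmono : Monotone U) (hU : IsERV U w γ) (hγ : γ < 0) :
    ¬ Tendsto U atTop atTop := by
  intro hinf
  have h2γ : (2 : ℝ) ^ γ < 1 := rpow_lt_one_of_one_lt_of_neg one_lt_two hγ
  obtain ⟨θ, hθγ, hθ₁⟩ := exists_between h2γ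
  have hθ₀ : 0 < θ := (rpow_pos_of_pos two_pos γ).trans hθγ
  obtain ⟨x, hx₁, hx⟩ :=
    ((eventually_ge_atTop 1).and (hU.eventually_dyadic_incr_le_geom hθγ)).exists
  set Δ := U (x * 2) - U x
  have hΔ : 0 ≤ Δ := sub_nonneg.2 (hmono (by linarith))
  have hbdd : ∀ n : ℕ, U (x * 2 ^ n) ≤ U x + Δ / (1 - θ) := fun n => by
    have hsum : ∑ k ∈ range n, θ ^ k * Δ ≤ Δ / (1 - θ) := by
      rw [← sum_mul, range_eq_Ico]
      calc _ ≤ θ ^ 0 / (1 - θ) * Δ :=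
            mul_le_mul_of_nonneg_right (geom_sum_Ico_le_of_lt_one hθ₀.le hθ₁) hΔ
        _ = Δ / (1 - θ) := by ring
    linarith [sub_eq_sum_dyadic_incr (F := U) x n,
      Finset.sum_le_sum fun k (_ : k ∈ range n) => hx k]
  have hdiv : Tendsto (fun n : ℕ => U (x * 2 ^ n)) atTop atTop := by
    refine hinf.comp (tendsto_atTop_mono (fun n => ?_)
      (tendsto_pow_atTop_atTop_of_one_lt one_lt_two))
    exact le_mul_of_one_le_left (by positivity) hx₁
  obtain ⟨n, hn⟩ := (hdiv.eventually_gt_atTop (U x + Δ / (1 - θ))).exists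
  exact (hbdd n).not_gt hn

lemma eventually_sub_le_pow_mul (hmono : Monotone U) (hU : IsERV U w γ) {M : ℝ}
    (hM : 2 ^ γ < M) (hM₂ : 2 ≤ M) :
    ∀ᶠ y in atTop, ∀ n : ℕ, U (y * 2 ^ n) - U y ≤ M ^ n * (U (y * 2) - U y) := by
  filter_upwards [eventually_ge_atTop 0, hU.eventually_dyadic_incr_le_geom hM] with y hy₀ hy n
  have hΔ : 0 ≤ U (y * 2) - U y := sub_nonneg.2 (hmono (by linarith))
  have hgeom : ∑ k ∈ range n, M ^ k ≤ M ^ n := by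
    have hMn : 1 ≤ M ^ n := one_le_pow₀ (by linarith)
    rw [geom_sum_eq (by linarith), div_le_iff₀ (by linarith)]
    nlinarith
  calc U (y * 2 ^ n) - U y ≤ ∑ k ∈ range n, M ^ k * (U (y * 2) - U y) := by
        rw [sub_eq_sum_dyadic_incr]
        exact Finset.sum_le_sum fun k _ => hy k
    _ ≤ M ^ n * (U (y * 2) - U y) := by
        rw [← sum_mul]
        exact mul_le_mul_of_nonneg_right hgeom hΔ

lemma eventually_pow_mul_le_sub (hmono : Monotone U) (hU : IsERV U w γ) (hθ₀ : 0 ≤ θ)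
    (hθ : θ < 2 ^ γ) :
    ∀ᶠ x in atTop, ∀ N : ℕ, θ ^ N * (U (x * 2) - U x) ≤ U (x * 2 ^ (N + 1)) - U x := by
  filter_upwards [eventually_ge_atTop 0, hU.eventually_geom_le_dyadic_incr hθ₀ hθ] with x hx₀ hx N
  have : U x ≤ U (x * 2 ^ N) := hmono (le_mul_of_one_le_right hx₀ (one_le_pow₀ one_le_two))
  linarith [hx N]

lemma not_isERV_comp_exp_of_pos (hmono : Monotone U) (hU : IsERV U w γ) (hγ : 0 < γ)
    (g : ℝ → ℝ) (ρ : ℝ) : ¬ IsERV (fun y => U (exp y)) g ρ := by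
  intro hq
  obtain ⟨θ, hθ₁, hθγ⟩ := exists_between (one_lt_rpow one_lt_two hγ)
  obtain ⟨j, hj⟩ := exists_nat_gt (max ρ 0)
  have hM : (2 : ℝ) ^ ρ < 2 ^ j := by
    rw [← rpow_natCast]
    exact rpow_lt_rpow_of_exponent_lt one_lt_two ((le_max_left _ _).trans_lt hj)
  have hM₂ : (2 : ℝ) ≤ 2 ^ j :=
    le_self_pow₀ one_le_two (by rintro rfl; simp at hj)
  obtain ⟨y, hy₂, ⟨hlow, hpos⟩, hup⟩ := ((eventually_ge_atTop 2).and
    ((tendsto_exp_atTop.eventually ((hU.eventually_pow_mul_le_sub hmono (by linarith) hθγ).and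
      hU.eventually_dyadic_incr_pos)).and
    (hq.eventually_sub_le_pow_mul (hmono.comp exp_monotone) hM hM₂))).exists
  obtain ⟨n, hn⟩ := exists_pow_mul_lt_pow_two_pow hθ₁ hpos j
    (2 ^ j * (U (exp (y * 2)) - U (exp y)))
  -- `θ ^ 2 ^ n` is doubly exponential in `n`, the bound from `q` only exponential.
  refine hn.not_ge ?_
  calc θ ^ 2 ^ n * (U (exp y * 2) - U (exp y))
      ≤ U (exp y * 2 ^ (2 ^ n + 1)) - U (exp y) := hlow (2 ^ n)
    _ ≤ U (exp (y * 2 ^ (n + 1))) - U (exp y) :=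
        sub_le_sub_right (hmono (exp_mul_two_pow_le hy₂ n)) _
    _ ≤ (2 ^ j) ^ (n + 1) * (U (exp (y * 2)) - U (exp y)) := hup (n + 1)
    _ = ((2 : ℝ) ^ n) ^ j * (2 ^ j * (U (exp (y * 2)) - U (exp y))) := by ring

end IsERV

theorem stmt4 (U w g : ℝ → ℝ) (γ ρ : ℝ)
    (hmono : Monotone U)
    (hinf : Tendsto U atTop atTop)
    (hwpos : ∀ t, 0 < w t) (hgpos : ∀ y, 0 < g y)
    (hUERV : ∀ l : ℝ, 0 < l →
      Tendsto (fun t => (U (t * l) - U t) / w t) atTop (nhds (h γ l)))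
    (hqERV : ∀ l : ℝ, 0 < l →
      Tendsto (fun y => (U (Real.exp (y * l)) - U (Real.exp y)) / g y)
        atTop (nhds (h ρ l))) :
    γ = 0 := by
  have hU : IsERV U w γ := ⟨hwpos, hUERV⟩
  rcases lt_trichotomy γ 0 with hneg | hzero | hpos
  · exact absurd hinf (hU.not_tendsto_atTop_of_neg hmono hneg)
  · exact hzero
  · exact absurd ⟨hgpos, hqERV⟩ (hU.not_isERV_comp_exp_of_pos hmono hpos g ρ)
end

section
/- Let F be a distribution function with right-continuous inverse U of 1/(1−F), set q := U ∘ exp, and suppose there exist ρ ∈ ℝ and a positive function g such that (q(yλ) − q(y))/g(y) → h_ρ(λ) for all λ > 0. Then for all x in the range h_ρ((0,∞)), one has −y^{-1} log(1 − F(x·g(y) + q(y))) → h_ρ^{-1}(x) as y → ∞, i.e., |1 − F(x g(y) + q(y))|^{1/y} → exp(−h_ρ^{-1}(x)). -/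
/-!
By the hypothesis, `U (exp (y * l')) ≈ U (exp y) + h ρ l' * g y`, and `h ρ` is strictly increasing,
so for `l₁ < l < l₂` the point `h ρ l * g y + U (exp y)` eventually lies strictly between
`U (exp (y * l₁))` and `U (exp (y * l₂))`. Since `U` is the generalised inverse of `1 / (1 - F)`,
this gives `exp (-(y * l₂)) ≤ 1 - F (h ρ l * g y + U (exp y)) ≤ exp (-(y * l₁))` eventually;
taking logarithms and letting `l₁, l₂ → l` proves the claim.
-/

open Filter Real

open Set Topology

lemma h_one (ρ : ℝ) : h ρ 1 = 0 := by
  unfold h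
  split_ifs <;> simp

lemma h_lt_h (ρ : ℝ) {a b : ℝ} (ha : 0 < a) (hab : a < b) : h ρ a < h ρ b := by
  unfold h
  split_ifs with hρ
  · exact log_lt_log ha hab
  rcases lt_or_gt_of_ne hρ with hneg | hpos
  · rw [div_lt_div_right_of_neg hneg]
    linarith [rpow_lt_rpow_of_neg ha hab hneg]
  · exact div_lt_div_of_pos_right (by linarith [rpow_lt_rpow ha.le hab hpos]) hpos

def tailLevelSet (F : ℝ → ℝ) (t : ℝ) : Set ℝ := {x | t ≤ 1 / (1 - F x)}

section tailLevelSet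

variable {F : ℝ → ℝ} {t w : ℝ}

lemma mem_tailLevelSet_iff (hF1 : ∀ x, F x ≤ 1) (ht : 0 < t) {x : ℝ} :
    x ∈ tailLevelSet F t ↔ F x < 1 ∧ 1 - F x ≤ t⁻¹ := by
  rcases (hF1 x).lt_or_eq with hlt | heq
  · have hpos : 0 < 1 - F x := by linarith
    rw [tailLevelSet, mem_ofPred_eq, le_one_div ht hpos, one_div]
    exact ⟨fun h => ⟨hlt, h⟩, And.right⟩
  · simp [tailLevelSet, heq, ht.not_ge]

lemma tailLevelSet_antitone : Antitone (tailLevelSet F) :=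
  fun _ _ hst _ hx => hst.trans hx

lemma bddBelow_tailLevelSet (hF : Monotone F) (hF1 : ∀ x, F x ≤ 1) (ht : 0 < t) {z : ℝ}
    (hz : t⁻¹ < 1 - F z) : BddBelow (tailLevelSet F t) := by
  refine ⟨z, fun x hx => (hF.reflect_lt ?_).le⟩
  linarith [((mem_tailLevelSet_iff hF1 ht).mp hx).2]

lemma eventually_bddBelow_tailLevelSet (hF : Monotone F) (hF1 : ∀ x, F x ≤ 1) {z : ℝ}
    (hz : F z < 1) : ∀ᶠ t in atTop, BddBelow (tailLevelSet F t) := by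
  have hz' : 0 < 1 - F z := by linarith
  filter_upwards [eventually_gt_atTop (1 - F z)⁻¹] with t ht
  have htpos : 0 < t := (inv_pos.mpr hz').trans ht
  exact bddBelow_tailLevelSet hF hF1 htpos ((inv_lt_comm₀ hz' htpos).mp ht)

lemma one_sub_le_inv_of_sInf_lt (hF : Monotone F) (hF1 : ∀ x, F x ≤ 1) (ht : 0 < t)
    (hne : (tailLevelSet F t).Nonempty) (hlt : sInf (tailLevelSet F t) < w) :
    1 - F w ≤ t⁻¹ := by
  obtain ⟨s, hs, hsw⟩ : ∃ s ∈ tailLevelSet F t, s < w := by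
    by_cases hb : BddBelow (tailLevelSet F t)
    · exact (csInf_lt_iff hb hne).mp hlt
    · exact not_bddBelow_iff.mp hb w
  linarith [((mem_tailLevelSet_iff hF1 ht).mp hs).2, hF hsw.le]

lemma inv_lt_one_sub_of_lt_sInf (hF : Monotone F) (hF1 : ∀ x, F x ≤ 1) (ht : 0 < t)
    (hne : (tailLevelSet F t).Nonempty) (hbdd : BddBelow (tailLevelSet F t))
    (hlt : w < sInf (tailLevelSet F t)) : t⁻¹ < 1 - F w := by
  obtain ⟨s, hs⟩ := hne
  have hFw : F w < 1 :=
    (hF (hlt.trans_le (csInf_le hbdd hs)).le).trans_lt ((mem_tailLevelSet_iff hF1 ht).mp hs).1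
  have hw : w ∉ tailLevelSet F t := fun hw => (csInf_le hbdd hw).not_gt hlt
  rw [mem_tailLevelSet_iff hF1 ht] at hw
  exact lt_of_not_ge fun h => hw ⟨hFw, h⟩

end tailLevelSet

lemma tendsto_exp_mul_const_atTop {c : ℝ} (hc : 0 < c) :
    Tendsto (fun y => exp (y * c)) atTop atTop :=
  tendsto_exp_atTop.comp (tendsto_id.atTop_mul_const hc)

/-- If the level sets were eventually empty, `U` would eventually vanish and the limit
`h ρ 2` of the hypothesis would be `0 = h ρ 1`. -/
lemma tailLevelSet_nonempty {F U g : ℝ → ℝ} {ρ : ℝ}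
    (hU : ∀ t, U t = sInf (tailLevelSet F t))
    (hGW : Tendsto (fun y => (U (exp (y * 2)) - U (exp y)) / g y) atTop (𝓝 (h ρ 2)))
    (t : ℝ) : (tailLevelSet F t).Nonempty := by
  by_contra hempty
  have hU0 : ∀ s, t ≤ s → U s = 0 := fun s hs => by
    rw [hU, Set.not_nonempty_iff_eq_empty.mp fun hne =>
      hempty (hne.mono (tailLevelSet_antitone hs)), Real.sInf_empty]
  have hzero : (fun y => (U (exp (y * 2)) - U (exp y)) / g y) =ᶠ[atTop] fun _ => 0 := by
    filter_upwards [(tendsto_exp_mul_const_atTop two_pos).eventually_ge_atTop t,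
      tendsto_exp_atTop.eventually_ge_atTop t] with y h2 h1
    simp [hU0 _ h1, hU0 _ h2]
  have h2 : h ρ 2 = 0 := tendsto_nhds_unique (hGW.congr' hzero) tendsto_const_nhds
  have := h_lt_h ρ one_pos one_lt_two
  rw [h_one, h2] at this
  exact this.false

section GWBounds

variable {F U g : ℝ → ℝ} {c x l' : ℝ}

lemma eventually_one_sub_le_exp (hF : Monotone F) (hF1 : ∀ x, F x ≤ 1)
    (hU : ∀ t, U t = sInf (tailLevelSet F t)) (hne : ∀ t, (tailLevelSet F t).Nonempty)
    (hg : ∀ y, 0 < g y)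
    (hlim : Tendsto (fun y => (U (exp (y * l')) - U (exp y)) / g y) atTop (𝓝 c))
    (hcx : c < x) :
    ∀ᶠ y in atTop, 1 - F (x * g y + U (exp y)) ≤ exp (-(y * l')) := by
  filter_upwards [hlim.eventually_lt_const hcx] with y hy
  rw [div_lt_iff₀ (hg y)] at hy
  rw [exp_neg]
  exact one_sub_le_inv_of_sInf_lt hF hF1 (exp_pos _) (hne _) (by rw [← hU]; linarith)

lemma eventually_exp_le_one_sub (hF : Monotone F) (hF1 : ∀ x, F x ≤ 1)
    (hU : ∀ t, U t = sInf (tailLevelSet F t)) (hne : ∀ t, (tailLevelSet F t).Nonempty)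
    (hbdd : ∀ᶠ t in atTop, BddBelow (tailLevelSet F t)) (hg : ∀ y, 0 < g y) (hl' : 0 < l')
    (hlim : Tendsto (fun y => (U (exp (y * l')) - U (exp y)) / g y) atTop (𝓝 c))
    (hxc : x < c) :
    ∀ᶠ y in atTop, exp (-(y * l')) ≤ 1 - F (x * g y + U (exp y)) := by
  filter_upwards [hlim.eventually_const_lt hxc,
    (tendsto_exp_mul_const_atTop hl').eventually hbdd] with y hy hb
  rw [lt_div_iff₀ (hg y)] at hy
  rw [exp_neg]
  exact (inv_lt_one_sub_of_lt_sInf hF hF1 (exp_pos _) (hne _) hb (by rw [← hU]; linarith)).le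

end GWBounds

lemma tendsto_neg_log_div_of_exp_bounds {u : ℝ → ℝ} {l : ℝ} (hl : 0 < l)
    (hupper : ∀ a, 0 < a → a < l → ∀ᶠ y in atTop, u y ≤ exp (-(y * a)))
    (hlower : ∀ b, l < b → ∀ᶠ y in atTop, exp (-(y * b)) ≤ u y) :
    Tendsto (fun y => -log (u y) / y) atTop (𝓝 l) := by
  rw [tendsto_order]
  constructor
  · intro a' ha'
    obtain ⟨a, ha'a, hal⟩ := exists_between (max_lt ha' hl)
    filter_upwards [hupper a ((le_max_right _ _).trans_lt ha'a) hal, hlower (l + 1) (by linarith),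
      eventually_gt_atTop 0] with y hu hu' hy
    have hlog : log (u y) ≤ -(y * a) := (log_le_iff_le_exp ((exp_pos _).trans_le hu')).mpr hu
    have : a ≤ -log (u y) / y := by rw [le_div_iff₀ hy]; linarith
    linarith [le_max_left a' 0]
  · intro b' hb'
    obtain ⟨b, hlb, hbb'⟩ := exists_between hb'
    filter_upwards [hlower b hlb, eventually_gt_atTop 0] with y hu hy
    have hlog : -(y * b) ≤ log (u y) := (le_log_iff_exp_le ((exp_pos _).trans_le hu)).mpr hu
    have : -log (u y) / y ≤ b := by rw [div_le_iff₀ hy]; linarith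
    linarith

theorem stmt5_general (F U g : ℝ → ℝ) (ρ : ℝ)
    (hFmono : Monotone F) (hF1 : ∀ x, F x ≤ 1)
    (hU : ∀ t, U t = sInf {x : ℝ | t ≤ 1 / (1 - F x)})
    (hgpos : ∀ y, 0 < g y)
    (hGW : ∀ l : ℝ, 0 < l →
      Tendsto (fun y => (U (Real.exp (y * l)) - U (Real.exp y)) / g y)
        atTop (nhds (h ρ l))) :
    ∀ l : ℝ, 0 < l →
      Tendsto
        (fun y => -(Real.log (1 - F (h ρ l * g y + U (Real.exp y)))) / y)
        atTop (nhds l) := by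
  intro l hl
  have hU' : ∀ t, U t = sInf (tailLevelSet F t) := hU
  have hne := tailLevelSet_nonempty hU' (hGW 2 two_pos)
  obtain ⟨z, hz⟩ := hne 1
  have hbdd :=
    eventually_bddBelow_tailLevelSet hFmono hF1 ((mem_tailLevelSet_iff hF1 one_pos).mp hz).1
  refine tendsto_neg_log_div_of_exp_bounds hl (fun a ha hal => ?_) (fun b hlb => ?_)
  · exact eventually_one_sub_le_exp hFmono hF1 hU' hne hgpos (hGW a ha) (h_lt_h ρ ha hal)
  · have hb := hl.trans hlb
    exact eventually_exp_le_one_sub hFmono hF1 hU' hne hbdd hgpos hb (hGW b hb) (h_lt_h ρ hl hlb)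

theorem stmt5 (F U g : ℝ → ℝ) (ρ : ℝ)
    (hFmono : Monotone F) (hF0 : ∀ x, 0 ≤ F x) (hF1 : ∀ x, F x ≤ 1)
    (hU : ∀ t, U t = sInf {x : ℝ | t ≤ 1 / (1 - F x)})
    (hgpos : ∀ y, 0 < g y)
    (hGW : ∀ l : ℝ, 0 < l →
      Tendsto (fun y => (U (Real.exp (y * l)) - U (Real.exp y)) / g y)
        atTop (nhds (h ρ l))) :
    ∀ l : ℝ, 0 < l →
      Tendsto
        (fun y => -(Real.log (1 - F (h ρ l * g y + U (Real.exp y)))) / y)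
        atTop (nhds l) :=
  stmt5_general F U g ρ hFmono hF1 hU hgpos hGW
end

section
/- Let F be a distribution function, U the left-continuous inverse of 1/(1−F), q := U ∘ exp, and suppose q is regularly varying with index ρ > 0. Then for all x > 0, |1 − F(x·q(y))|^{1/y} → exp(−x^{1/ρ}) as y → ∞ (the Weibull tail limit). -/
/-!
Write `S a = {z | exp a ≤ 1 / (1 - F z)} = {z | F z < 1, a ≤ -log (1 - F z)}`, so that
`U (exp a) = sInf (S a)`. Regular variation forces `U (exp y)` to be nonzero, hence `S y` to be
nonempty and bounded below (`sInf` is `0` otherwise); `U` is then nondecreasing, and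
`U (exp (2 * y)) / U (exp y) → 2^ρ > 1` makes it positive. For `l^ρ < x < l'^ρ` regular
variation gives `U (exp (y * l)) < x * U (exp y) < U (exp (y * l'))` eventually, and the
characterisation of `sInf` turns this into `y * l ≤ -log (1 - F (x * U (exp y))) < y * l'`.
-/

open Filter Real Topology

lemma Real.nonempty_and_bddBelow_of_sInf_ne_zero {s : Set ℝ} (h : sInf s ≠ 0) :
    s.Nonempty ∧ BddBelow s := by
  refine ⟨Set.nonempty_iff_ne_empty.2 ?_, ?_⟩
  · rintro rfl
    exact h Real.sInf_empty
  · by_contra hs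
    exact h (Real.sInf_of_not_bddBelow hs)

lemma Real.sInf_le_sInf_of_ne_zero {s t : Set ℝ} (hts : t ⊆ s) (hs : sInf s ≠ 0)
    (ht : sInf t ≠ 0) : sInf s ≤ sInf t :=
  csInf_le_csInf (Real.nonempty_and_bddBelow_of_sInf_ne_zero hs).2
    (Real.nonempty_and_bddBelow_of_sInf_ne_zero ht).1 hts

lemma Filter.Tendsto.eventually_denom_ne_zero {α : Type*} {l : Filter α} {f g : α → ℝ} {c : ℝ}
    (h : Tendsto (fun y => f y / g y) l (𝓝 c)) (hc : c ≠ 0) : ∀ᶠ y in l, g y ≠ 0 := by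
  filter_upwards [h.eventually_ne hc] with y hy hg
  simp [hg] at hy

lemma Filter.Tendsto.eventually_numer_ne_zero {α : Type*} {l : Filter α} {f g : α → ℝ} {c : ℝ}
    (h : Tendsto (fun y => f y / g y) l (𝓝 c)) (hc : c ≠ 0) : ∀ᶠ y in l, f y ≠ 0 := by
  filter_upwards [h.eventually_ne hc] with y hy hf
  simp [hf] at hy

lemma pos_of_le_of_one_lt_div {a b : ℝ} (hba : b ≤ a) (h : 1 < a / b) : 0 < b := by
  rcases one_lt_div_iff.1 h with ⟨hb, -⟩ | ⟨-, hab⟩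
  · exact hb
  · exact absurd hba (not_le.2 hab)

lemma exp_le_one_div_iff {a s : ℝ} : exp a ≤ 1 / s ↔ 0 < s ∧ a ≤ -log s := by
  constructor
  · intro h
    have hs : 0 < s := one_div_pos.1 ((exp_pos a).trans_le h)
    refine ⟨hs, ?_⟩
    rwa [← log_inv, le_log_iff_exp_le (inv_pos.2 hs), ← one_div]
  · rintro ⟨hs, h⟩
    rwa [← log_inv, le_log_iff_exp_le (inv_pos.2 hs), ← one_div] at h

section Quantile

variable {F : ℝ → ℝ} {a z : ℝ}

lemma one_sub_pos_and_neg_log_lt_of_lt_sInf (hF : Monotone F)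
    (hne : {w | exp a ≤ 1 / (1 - F w)}.Nonempty) (hbdd : BddBelow {w | exp a ≤ 1 / (1 - F w)})
    (hz : z < sInf {w | exp a ≤ 1 / (1 - F w)}) : 0 < 1 - F z ∧ -log (1 - F z) < a := by
  obtain ⟨w, hw⟩ := hne
  have hFw := (exp_le_one_div_iff.1 hw).1
  have hFz : 0 < 1 - F z := by linarith [hF (hz.trans_le (csInf_le hbdd hw)).le]
  refine ⟨hFz, not_le.1 fun h => notMem_of_lt_csInf hz hbdd ?_⟩
  exact exp_le_one_div_iff.2 ⟨hFz, h⟩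

lemma le_neg_log_of_sInf_lt (hF : Monotone F) (hne : {w | exp a ≤ 1 / (1 - F w)}.Nonempty)
    (hz : sInf {w | exp a ≤ 1 / (1 - F w)} < z) (hFz : 0 < 1 - F z) : a ≤ -log (1 - F z) := by
  obtain ⟨w, hw, hwz⟩ := exists_lt_of_csInf_lt hne hz
  obtain ⟨-, haw⟩ := exp_le_one_div_iff.1 hw
  have : log (1 - F z) ≤ log (1 - F w) := log_le_log hFz (by linarith [hF hwz.le])
  linarith

end Quantile

section RegularVariation

variable {F U : ℝ → ℝ} {c l x : ℝ}

lemma eventually_pos_of_tendsto_div_two (hU : ∀ t, U t = sInf {x : ℝ | t ≤ 1 / (1 - F x)})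
    (h2 : Tendsto (fun y => U (exp (y * 2)) / U (exp y)) atTop (𝓝 c)) (hc : 1 < c) :
    ∀ᶠ y in atTop, 0 < U (exp y) := by
  have hne : ∀ᶠ y in atTop, U (exp y) ≠ 0 := h2.eventually_denom_ne_zero (by positivity)
  filter_upwards [h2.eventually_const_lt hc, eventually_ge_atTop 0,
    tendsto_id.atTop_mul_const two_pos |>.eventually hne, hne] with y hratio hy h2y hy'
  refine pos_of_le_of_one_lt_div ?_ hratio
  simp only [hU, id] at h2y hy' ⊢
  exact Real.sInf_le_sInf_of_ne_zero (fun z hz => (exp_le_exp.2 (by linarith)).trans hz) hy' h2y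

lemma eventually_neg_log_lt (hF : Monotone F) (hU : ∀ t, U t = sInf {x : ℝ | t ≤ 1 / (1 - F x)})
    (hl : Tendsto (fun y => U (exp (y * l)) / U (exp y)) atTop (𝓝 c)) (hc : c ≠ 0) (hxc : x < c)
    (hpos : ∀ᶠ y in atTop, 0 < U (exp y)) :
    ∀ᶠ y in atTop, 0 < 1 - F (x * U (exp y)) ∧ -log (1 - F (x * U (exp y))) < y * l := by
  filter_upwards [hl.eventually_const_lt hxc, hl.eventually_numer_ne_zero hc, hpos]
    with y hxy hne hq
  rw [lt_div_iff₀ hq] at hxy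
  rw [hU (exp (y * l))] at hne hxy
  obtain ⟨hne, hbdd⟩ := Real.nonempty_and_bddBelow_of_sInf_ne_zero hne
  exact one_sub_pos_and_neg_log_lt_of_lt_sInf hF hne hbdd hxy

lemma eventually_le_neg_log (hF : Monotone F) (hU : ∀ t, U t = sInf {x : ℝ | t ≤ 1 / (1 - F x)})
    (hl : Tendsto (fun y => U (exp (y * l)) / U (exp y)) atTop (𝓝 c)) (hc : c ≠ 0) (hcx : c < x)
    (hpos : ∀ᶠ y in atTop, 0 < U (exp y)) :
    ∀ᶠ y in atTop, 0 < 1 - F (x * U (exp y)) → y * l ≤ -log (1 - F (x * U (exp y))) := by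
  filter_upwards [hl.eventually_lt_const hcx, hl.eventually_numer_ne_zero hc, hpos]
    with y hxy hne hq
  rw [div_lt_iff₀ hq] at hxy
  rw [hU (exp (y * l))] at hne hxy
  exact le_neg_log_of_sInf_lt hF (Real.nonempty_and_bddBelow_of_sInf_ne_zero hne).1 hxy

end RegularVariation

theorem stmt6_general (F U : ℝ → ℝ) (ρ : ℝ) (hρ : 0 < ρ)
    (hFmono : Monotone F)
    (hU : ∀ t, U t = sInf {x : ℝ | t ≤ 1 / (1 - F x)})
    (hRV : ∀ l : ℝ, 0 < l →
      Tendsto (fun y => U (Real.exp (y * l)) / U (Real.exp y)) atTop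
        (nhds (l ^ ρ))) :
    ∀ x : ℝ, 0 < x →
      Tendsto (fun y => -(Real.log (1 - F (x * U (Real.exp y)))) / y)
        atTop (nhds (x ^ (1 / ρ))) := by
  intro x hx
  have hpos := eventually_pos_of_tendsto_div_two hU (hRV 2 two_pos)
    (one_lt_rpow one_lt_two hρ)
  have hupper : ∀ b, x ^ (1 / ρ) < b → ∀ᶠ y in atTop,
      0 < 1 - F (x * U (exp y)) ∧ -log (1 - F (x * U (exp y))) / y < b := by
    intro b hb
    have hb0 : 0 < b := (rpow_pos_of_pos hx _).trans hb
    rw [one_div, rpow_inv_lt_iff_of_pos hx.le hb0.le hρ] at hb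
    filter_upwards [eventually_neg_log_lt hFmono hU (hRV b hb0) (by positivity) hb hpos,
      eventually_gt_atTop 0] with y ⟨hF, hlog⟩ hy
    exact ⟨hF, (div_lt_iff₀ hy).2 (by linarith)⟩
  refine tendsto_order.2 ⟨fun a ha => ?_, fun b hb => (hupper b hb).mono fun y hy => hy.2⟩
  obtain ⟨l, hal, hl⟩ := exists_between (max_lt ha (rpow_pos_of_pos hx (1 / ρ)))
  have hl0 : 0 < l := (le_max_right a 0).trans_lt hal
  rw [one_div, lt_rpow_inv_iff_of_pos hl0.le hx.le hρ] at hl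
  filter_upwards [eventually_le_neg_log hFmono hU (hRV l hl0) (by positivity) hl hpos,
    hupper _ (lt_add_one _), eventually_gt_atTop 0] with y hlog hF hy
  exact ((le_max_left a 0).trans_lt hal).trans_le ((le_div_iff₀ hy).2 (by linarith [hlog hF.1]))

theorem stmt6 (F U : ℝ → ℝ) (ρ : ℝ) (hρ : 0 < ρ)
    (hFmono : Monotone F) (hF0 : ∀ x, 0 ≤ F x) (hF1 : ∀ x, F x ≤ 1)
    (hU : ∀ t, U t = sInf {x : ℝ | t ≤ 1 / (1 - F x)})
    (hRV : ∀ l : ℝ, 0 < l →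
      Tendsto (fun y => U (Real.exp (y * l)) / U (Real.exp y)) atTop
        (nhds (l ^ ρ))) :
    ∀ x : ℝ, 0 < x →
      Tendsto (fun y => -(Real.log (1 - F (x * U (Real.exp y)))) / y)
        atTop (nhds (x ^ (1 / ρ))) :=
  stmt6_general F U ρ hρ hFmono hU hRV
end

section
/- Let U be nondecreasing with finite limit U(∞) < ∞, let q := U ∘ exp, and let ρ̃ : ℝ → ℝ and g̃ : ℝ → (0,∞) satisfy ρ̃(y) → −∞ and g̃(y)·h_{ρ̃(y)}(ξ) = q(yξ) − q(y) · (1+o(1)) for some fixed ξ > 1, where h_a(λ) = (λ^a−1)/a. Define the penultimate GW approximation q̃_y(z) := q(y) + g̃(y) h_{ρ̃(y)}(z/y). Then sup_{z ≥ y} |q̃_y(z) − q(z)| → 0 as y → ∞. -/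
/-!
For `ρ < 0` and `λ ≥ 1` one has `0 ≤ h ρ λ ≤ -1/ρ`, so the correction term `g̃(y) h_{ρ̃(y)}(z/y)`
lies between `0` and `g̃(y)·(-1/ρ̃(y)) = g̃(y) h_{ρ̃(y)}(ξ) / (1 - ξ^{ρ̃(y)})`, uniformly in `z ≥ y`.
The numerator is asymptotic to `q(yξ) - q(y) → 0` and the denominator tends to `1`, so the
correction vanishes uniformly. Meanwhile `q(z) - q(y)` lies between `0` and `L - q(y) → 0`.
-/

open Filter Real

open Topology

theorem h_of_ne_zero {ρ : ℝ} (hρ : ρ ≠ 0) (lam : ℝ) : h ρ lam = (lam ^ ρ - 1) / ρ :=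
  if_neg hρ

theorem h_nonneg (ρ : ℝ) {lam : ℝ} (hlam : 1 ≤ lam) : 0 ≤ h ρ lam := by
  rcases lt_trichotomy ρ 0 with hρ | rfl | hρ
  · rw [h_of_ne_zero hρ.ne]
    exact div_nonneg_of_nonpos (by linarith [rpow_le_one_of_one_le_of_nonpos hlam hρ.le]) hρ.le
  · simpa [h] using log_nonneg hlam
  · rw [h_of_ne_zero hρ.ne']
    exact div_nonneg (by linarith [one_le_rpow hlam hρ.le]) hρ.le

theorem h_le_neg_inv {ρ : ℝ} (hρ : ρ < 0) {lam : ℝ} (hlam : 0 ≤ lam) : h ρ lam ≤ -ρ⁻¹ := by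
  rw [h_of_ne_zero hρ.ne, sub_div, div_eq_mul_inv, one_div]
  linarith [mul_nonpos_of_nonneg_of_nonpos (rpow_nonneg hlam ρ) (inv_nonpos.mpr hρ.le)]

theorem neg_inv_eq_h_div {ρ : ℝ} (hρ : ρ ≠ 0) {lam : ℝ} (hlam : lam ^ ρ ≠ 1) :
    -ρ⁻¹ = h ρ lam / (1 - lam ^ ρ) := by
  rw [h_of_ne_zero hρ, eq_div_iff (sub_ne_zero.mpr (Ne.symm hlam))]
  field_simp
  ring

theorem tendsto_zero_of_div_tendsto_one {α : Type*} {l : Filter α} {f g : α → ℝ}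
    (hfg : Tendsto (fun x => f x / g x) l (𝓝 1)) (hg : Tendsto g l (𝓝 0)) :
    Tendsto f l (𝓝 0) := by
  have hg_ne : ∀ᶠ x in l, g x ≠ 0 := by
    filter_upwards [hfg.eventually_ne one_ne_zero] with x hx hgx
    simp [hgx] at hx
  have := hfg.mul hg
  rw [mul_zero] at this
  refine this.congr' ?_
  filter_upwards [hg_ne] with x hx
  exact div_mul_cancel₀ (f x) hx

theorem tendsto_sub_comp_mul_of_tendsto {q : ℝ → ℝ} {L : ℝ} (hq : Tendsto q atTop (𝓝 L))
    {ξ : ℝ} (hξ : 0 < ξ) : Tendsto (fun y => q (y * ξ) - q y) atTop (𝓝 0) := by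
  simpa using (hq.comp (tendsto_id.atTop_mul_const hξ)).sub hq

theorem tendsto_mul_neg_inv_of_tendsto_mul_h {ρ g : ℝ → ℝ} {ξ : ℝ} (hξ : 1 < ξ)
    (hρ : Tendsto ρ atTop atBot) (hgh : Tendsto (fun y => g y * h (ρ y) ξ) atTop (𝓝 0)) :
    Tendsto (fun y => g y * -(ρ y)⁻¹) atTop (𝓝 0) := by
  have hpow : Tendsto (fun y => 1 - ξ ^ ρ y) atTop (𝓝 1) := by
    simpa using tendsto_const_nhds.sub ((tendsto_rpow_atBot_of_base_gt_one ξ hξ).comp hρ)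
  have := hgh.div hpow one_ne_zero
  rw [zero_div] at this
  refine this.congr' ?_
  filter_upwards [hρ.eventually (eventually_lt_atBot 0)] with y hy
  rw [neg_inv_eq_h_div hy.ne (rpow_lt_one_of_one_lt_of_neg hξ hy).ne,
    Pi.div_apply, mul_div_assoc]

theorem stmt8 (U : ℝ → ℝ) (L : ℝ) (ρt gt : ℝ → ℝ) (ξ : ℝ) (hξ : 1 < ξ)
    (hmono : Monotone U)
    (hlim : Tendsto U atTop (nhds L))
    (hρt : Tendsto ρt atTop atBot)
    (hgtpos : ∀ y, 0 < gt y)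
    (hgt : Tendsto
      (fun y => gt y * h (ρt y) ξ /
        (U (Real.exp (y * ξ)) - U (Real.exp y))) atTop (nhds 1)) :
    ∀ ε : ℝ, 0 < ε → ∀ᶠ y in atTop, ∀ z : ℝ, y ≤ z →
      |U (Real.exp y) + gt y * h (ρt y) (z / y) - U (Real.exp z)| < ε := by
  intro ε hε
  set q := fun y => U (Real.exp y)
  have hq_mono : Monotone q := hmono.comp exp_monotone
  have hq : Tendsto q atTop (𝓝 L) := hlim.comp tendsto_exp_atTop
  have hbound := tendsto_mul_neg_inv_of_tendsto_mul_h hξ hρt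
    (tendsto_zero_of_div_tendsto_one hgt (tendsto_sub_comp_mul_of_tendsto hq (by linarith)))
  filter_upwards [eventually_gt_atTop 0, hρt.eventually (eventually_lt_atBot 0),
      hq.eventually (eventually_gt_nhds (sub_lt_self L hε)),
      hbound.eventually (eventually_lt_nhds hε)] with y hy hρ hqy hgy z hz
  have hzy : 1 ≤ z / y := (one_le_div hy).mpr hz
  have hcorr_nonneg : 0 ≤ gt y * h (ρt y) (z / y) :=
    mul_nonneg (hgtpos y).le (h_nonneg _ hzy)
  have hcorr_le : gt y * h (ρt y) (z / y) ≤ gt y * -(ρt y)⁻¹ :=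
    mul_le_mul_of_nonneg_left (h_le_neg_inv hρ (by linarith)) (hgtpos y).le
  have hqyz : q y ≤ q z := hq_mono hz
  have hqzL : q z ≤ L := hq_mono.ge_of_tendsto hq z
  rw [abs_lt]
  constructor <;> linarith
end

section
/- Let q ∈ ERV_ρ(g): (q(yλ)−q(y))/g(y) → h_ρ(λ) locally uniformly in λ > 0, with q nondecreasing, q ≥ some positive constant eventually. Let ρ̃ : ℝ → ℝ with ρ̃(y) → ρ and g̃ positive with g̃(y) ~ g(y) as y → ∞. Define q̃_y(z) := q(y) + g̃(y) h_{ρ̃(y)}(z/y). Then for every Λ > 1, sup_{λ ∈ [1/Λ, Λ]} |(q̃_y(yλ) − q(yλ))/q(y)| → 0 as y → ∞. -/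
/-!
For `l` in a compact interval `[Λ⁻¹, Λ]`, both `(q (y * l) - q y) / g y` and
`gt y / g y * h (ρt y) l` are eventually monotone in `l` and converge pointwise to the
continuous function `h ρ` (the second because `h` is continuous in its index), so by Pólya's
argument both converge uniformly. The relative error is `g y / q y` times their difference,
and `g / q` stays bounded because `h ρ 2⁻¹ < 0` forces `q y - q (y / 2) ≳ g y`.
-/

open Filter Real

open Set Topology

lemma h_eq_slope {ρ : ℝ} (hρ : ρ ≠ 0) (l : ℝ) : h ρ l = slope (l ^ ·) 0 ρ := by
  simp [h, hρ, slope_def_field, div_eq_inv_mul]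

lemma continuousAt_h_index {l : ℝ} (hl : 0 < l) (ρ : ℝ) : ContinuousAt (h · l) ρ := by
  rcases eq_or_ne ρ 0 with rfl | hρ
  · have hderiv :=
      hasDerivAt_iff_tendsto_slope.mp (hasStrictDerivAt_const_rpow hl 0).hasDerivAt
    rw [← continuousWithinAt_compl_self, ContinuousWithinAt]
    simp only [rpow_zero, one_mul] at hderiv
    refine (hderiv.congr' ?_).trans_eq (by simp [h])
    filter_upwards [self_mem_nhdsWithin] with r hr
    exact (h_eq_slope hr l).symm
  · have hcont : ContinuousAt (fun r => (l ^ r - 1) / r) ρ :=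
      ((continuousAt_const_rpow hl.ne').sub continuousAt_const).div continuousAt_id hρ
    refine hcont.congr ?_
    filter_upwards [eventually_ne_nhds hρ] with r hr
    simp [h, hr]

lemma continuousOn_h (ρ : ℝ) : ContinuousOn (h ρ) (Ioi 0) := by
  unfold h
  split_ifs
  · exact continuousOn_log.mono fun x hx => ne_of_gt hx
  · exact ((continuousOn_id.rpow_const fun x hx => Or.inl (ne_of_gt hx)).sub
      continuousOn_const).div_const _

lemma monotoneOn_h (ρ : ℝ) : MonotoneOn (h ρ) (Ioi 0) := by
  intro x hx y hy hxy
  simp only [h]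
  split_ifs with hρ
  · exact log_le_log hx hxy
  rcases Ne.lt_or_gt hρ with hneg | hpos
  · exact div_le_div_of_nonpos_of_le hneg.le
      (sub_le_sub_right (rpow_le_rpow_of_nonpos hx hxy hneg.le) 1)
  · exact div_le_div_of_nonneg_right (by gcongr; exact le_of_lt hx) hpos.le

lemma h_neg_of_lt_one (ρ : ℝ) {l : ℝ} (hl₀ : 0 < l) (hl₁ : l < 1) : h ρ l < 0 := by
  simp only [h]
  split_ifs with hρ
  · exact log_neg hl₀ hl₁
  rcases Ne.lt_or_gt hρ with hneg | hpos
  · exact div_neg_of_pos_of_neg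
      (sub_pos.mpr (one_lt_rpow_of_pos_of_lt_one_of_neg hl₀ hl₁ hneg)) hneg
  · exact div_neg_of_neg_of_pos (sub_neg.mpr (rpow_lt_one hl₀.le hl₁ hpos)) hpos

theorem tendstoUniformlyOn_Icc_of_monotoneOn {ι : Type*} {p : Filter ι} {F : ι → ℝ → ℝ}
    {f : ℝ → ℝ} {a b : ℝ} (hF : ∀ᶠ n in p, MonotoneOn (F n) (Icc a b))
    (hf : ContinuousOn f (Icc a b)) (hlim : ∀ x ∈ Icc a b, Tendsto (F · x) p (𝓝 (f x))) :
    TendstoUniformlyOn F f p (Icc a b) := by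
  rw [← tendstoLocallyUniformlyOn_iff_tendstoUniformlyOn_of_compact isCompact_Icc,
    Metric.tendstoLocallyUniformlyOn_iff]
  intro ε hε x hx
  obtain ⟨δ, hδ, hfδ⟩ := Metric.continuousWithinAt_iff.mp (hf x hx) (ε / 3) (by positivity)
  have hclose : ∀ z ∈ Icc a b, z ∈ Icc (x - δ / 2) (x + δ / 2) → |f z - f x| < ε / 3 :=
    fun z hz hzδ => hfδ hz <| by
      rw [Real.dist_eq, abs_lt]; constructor <;> linarith [hzδ.1, hzδ.2]
  -- near `x`, `F n` is squeezed between its values at the nodes `u ≤ x ≤ v`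
  set u := max a (x - δ / 2)
  set v := min b (x + δ / 2)
  have hxu : x - δ / 2 ≤ u ∧ u ≤ x := ⟨le_max_right _ _, max_le hx.1 (by linarith)⟩
  have hxv : x ≤ v ∧ v ≤ x + δ / 2 := ⟨le_min hx.2 (by linarith), min_le_right _ _⟩
  have hu : u ∈ Icc a b := ⟨le_max_left _ _, hxu.2.trans hx.2⟩
  have hv : v ∈ Icc a b := ⟨hx.1.trans hxv.1, min_le_left _ _⟩
  have hfu := hclose u hu ⟨hxu.1, by linarith⟩
  have hfv := hclose v hv ⟨by linarith, hxv.2⟩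
  have hball : ∀ y ∈ Icc a b, ∀ᶠ n in p, |F n y - f y| < ε / 3 := fun y hy =>
    (hlim y hy).eventually (Metric.ball_mem_nhds _ (by positivity))
  refine ⟨Icc a b ∩ Ioo (x - δ / 2) (x + δ / 2),
    inter_mem_nhdsWithin _ (Ioo_mem_nhds (by linarith) (by linarith)), ?_⟩
  filter_upwards [hF, hball u hu, hball v hv] with n hmono hnu hnv z ⟨hz, hzδ⟩
  have hFu : F n u ≤ F n z := hmono hu hz (max_le hz.1 hzδ.1.le)
  have hFz : F n z ≤ F n v := hmono hz hv (le_min hz.2 hzδ.2.le)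
  have hfz := hclose z hz ⟨hzδ.1.le, hzδ.2.le⟩
  rw [abs_lt] at hfu hfv hnu hnv hfz
  rw [Real.dist_eq, abs_lt]
  constructor <;> linarith [hfu.1, hfu.2, hfv.1, hfv.2, hnu.1, hnu.2, hnv.1, hnv.2, hfz.1, hfz.2]

lemma exists_eventually_div_le_of_tendsto_neg {q g : ℝ → ℝ} {c l L : ℝ} (hc : 0 < c)
    (hqc : ∀ᶠ y in atTop, c ≤ q y) (hg : ∀ y, 0 < g y) (hl : 0 < l) (hL : L < 0)
    (hlim : Tendsto (fun y => (q (y * l) - q y) / g y) atTop (𝓝 L)) :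
    ∃ C > 0, ∀ᶠ y in atTop, 0 < q y ∧ g y / q y ≤ C := by
  refine ⟨-2 / L, div_pos_of_neg_of_neg (by norm_num) hL, ?_⟩
  filter_upwards [hlim.eventually_lt_const (by linarith : L < L / 2),
    (tendsto_id.atTop_mul_const hl).eventually hqc] with y hy (hqyl : c ≤ q (y * l))
  rw [div_lt_iff₀ (hg y)] at hy
  have hq : 0 < q y := by nlinarith [hg y]
  refine ⟨hq, ?_⟩
  rw [div_le_iff₀ hq, div_mul_eq_mul_div, le_div_iff_of_neg hL]
  linarith

section UniformConvergence

variable {q g : ℝ → ℝ} {ρ a b : ℝ}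

lemma tendstoUniformlyOn_Icc_sub_div (hmono : Monotone q) (hg : ∀ y, 0 < g y)
    (hERV : ∀ l : ℝ, 0 < l → Tendsto (fun y => (q (y * l) - q y) / g y) atTop (𝓝 (h ρ l)))
    (ha : 0 < a) :
    TendstoUniformlyOn (fun y l => (q (y * l) - q y) / g y) (h ρ) atTop (Icc a b) := by
  have hK : Icc a b ⊆ Ioi 0 := fun l hl => ha.trans_le hl.1
  refine tendstoUniformlyOn_Icc_of_monotoneOn ?_ ((continuousOn_h ρ).mono hK)
    fun l hl => hERV l (hK hl)
  filter_upwards [eventually_ge_atTop 0] with y hy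
  exact fun l₁ _ l₂ _ hl => div_le_div_of_nonneg_right
    (sub_le_sub_right (hmono (mul_le_mul_of_nonneg_left hl hy)) _) (hg y).le

lemma tendstoUniformlyOn_Icc_mul_h {gt ρt : ℝ → ℝ} (hρt : Tendsto ρt atTop (𝓝 ρ))
    (hgt : Tendsto (fun y => gt y / g y) atTop (𝓝 1)) (ha : 0 < a) :
    TendstoUniformlyOn (fun y l => gt y / g y * h (ρt y) l) (h ρ) atTop (Icc a b) := by
  have hK : Icc a b ⊆ Ioi 0 := fun l hl => ha.trans_le hl.1
  refine tendstoUniformlyOn_Icc_of_monotoneOn ?_ ((continuousOn_h ρ).mono hK) fun l hl => ?_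
  · filter_upwards [hgt.eventually (lt_mem_nhds one_pos)] with y hy
    exact fun l₁ hl₁ l₂ hl₂ hl =>
      mul_le_mul_of_nonneg_left (monotoneOn_h _ (hK hl₁) (hK hl₂) hl) hy.le
  · simpa using hgt.mul ((continuousAt_h_index (hK hl) ρ).tendsto.comp hρt)

end UniformConvergence

theorem stmt10_general (q g ρt gt : ℝ → ℝ) (ρ : ℝ)
    (hmono : Monotone q)
    (hqpos : ∃ c : ℝ, 0 < c ∧ ∀ᶠ y in atTop, c ≤ q y)
    (hgpos : ∀ y, 0 < g y)
    (hERV : ∀ l : ℝ, 0 < l →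
      Tendsto (fun y => (q (y * l) - q y) / g y) atTop (nhds (h ρ l)))
    (hρt : Tendsto ρt atTop (nhds ρ))
    (hgt : Tendsto (fun y => gt y / g y) atTop (nhds 1)) :
    ∀ Λ : ℝ, 1 < Λ → ∀ ε : ℝ, 0 < ε → ∀ᶠ y in atTop,
      ∀ l ∈ Set.Icc Λ⁻¹ Λ,
        |(q y + gt y * h (ρt y) l - q (y * l)) / q y| < ε := by
  obtain ⟨c, hc, hqc⟩ := hqpos
  obtain ⟨C, hC, hbound⟩ := exists_eventually_div_le_of_tendsto_neg hc hqc hgpos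
    (by norm_num : (0 : ℝ) < 2⁻¹) (h_neg_of_lt_one ρ (by norm_num) (by norm_num))
    (hERV _ (by norm_num))
  intro Λ hΛ ε hε
  have hΛ₀ : 0 < Λ⁻¹ := inv_pos.mpr (by linarith)
  have hunif := (tendstoUniformlyOn_Icc_sub_div hmono hgpos hERV hΛ₀ (b := Λ)).sub
    (tendstoUniformlyOn_Icc_mul_h hρt hgt hΛ₀)
  filter_upwards [Metric.tendstoUniformlyOn_iff.mp hunif (ε / C) (by positivity),
    hbound] with y hy ⟨hq, hgq⟩ l hl
  have hgy := hgpos y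
  have hkey : (q y + gt y * h (ρt y) l - q (y * l)) / q y
      = g y / q y * (gt y / g y * h (ρt y) l - (q (y * l) - q y) / g y) := by
    field_simp
    ring
  have hdiff : |gt y / g y * h (ρt y) l - (q (y * l) - q y) / g y| < ε / C := by
    simpa [Real.dist_eq] using hy l hl
  rw [hkey, abs_mul, abs_of_pos (div_pos hgy hq)]
  calc g y / q y * |gt y / g y * h (ρt y) l - (q (y * l) - q y) / g y|
      ≤ C * |gt y / g y * h (ρt y) l - (q (y * l) - q y) / g y| := by gcongr
    _ < C * (ε / C) := by gcongr
    _ = ε := mul_div_cancel₀ ε hC.ne'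

theorem stmt10 (q g ρt gt : ℝ → ℝ) (ρ : ℝ)
    (hmono : Monotone q)
    (hqpos : ∃ c : ℝ, 0 < c ∧ ∀ᶠ y in atTop, c ≤ q y)
    (hgpos : ∀ y, 0 < g y) (hgtpos : ∀ y, 0 < gt y)
    (hERV : ∀ l : ℝ, 0 < l →
      Tendsto (fun y => (q (y * l) - q y) / g y) atTop (nhds (h ρ l)))
    (hρt : Tendsto ρt atTop (nhds ρ))
    (hgt : Tendsto (fun y => gt y / g y) atTop (nhds 1)) :
    ∀ Λ : ℝ, 1 < Λ → ∀ ε : ℝ, 0 < ε → ∀ᶠ y in atTop,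
      ∀ l ∈ Set.Icc Λ⁻¹ Λ,
        |(q y + gt y * h (ρt y) l - q (y * l)) / q y| < ε :=
  stmt10_general q g ρt gt ρ hmono hqpos hgpos hERV hρt hgt
end

section
/- Let U be regularly varying at infinity with index γ > 0 and eventually > 1. Then for every ε ∈ (0, min(γ,1)) there exists y_ε > 0 such that for all y ≥ y_ε and all λ ≥ 1: y(λ−1)(γ−ε) − ε ≤ log U(exp(yλ)) − log U(exp(y)) ≤ y(λ−1)(γ+ε) + ε. -/
/-!
With `g s = log U(eˢ)`, regular variation at the single ratio `μ = e^δ` says that the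
`δ`-increments `g (s + δ) - g s` tend to `δ γ`, so for large `s` they lie within `δ ε / 2`
of `δ γ`. Since `g` is eventually monotone, chaining `⌊h / δ⌋` or `⌊h / δ⌋ + 1` of them bounds
`g (y + h) - g y` between `(h - δ)(γ - ε/2)` and `(h + δ)(γ + ε/2)`; the choice
`δ = ε / (2γ)` makes the errors `δ (γ ± ε/2)` at most `ε`.
-/

open Filter Real Set Topology

section IncrementBounds

variable {g : ℝ → ℝ} {y₀ δ a b : ℝ}

lemma increment_bounds_natCast_mul (hδ : 0 ≤ δ)
    (hstep : ∀ s ≥ y₀, |g (s + δ) - g s - δ * a| ≤ δ * b) (n : ℕ) {s : ℝ} (hs : y₀ ≤ s) :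
    n * δ * (a - b) ≤ g (s + n * δ) - g s ∧ g (s + n * δ) - g s ≤ n * δ * (a + b) := by
  induction n with
  | zero => simp
  | succ n ih =>
    have hs' : y₀ ≤ s + n * δ := le_add_of_le_of_nonneg hs (by positivity)
    obtain ⟨hlow, hup⟩ := abs_le.mp (hstep _ hs')
    have hshift : s + ↑(n + 1) * δ = s + n * δ + δ := by push_cast; ring
    rw [hshift]
    push_cast
    constructor <;> linarith [ih.1, ih.2]

lemma MonotoneOn.increment_bounds (hg : MonotoneOn g (Ici y₀)) (hδ : 0 < δ) (hba : b ≤ a)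
    (hstep : ∀ s ≥ y₀, |g (s + δ) - g s - δ * a| ≤ δ * b) {s h : ℝ} (hs : y₀ ≤ s)
    (hh : 0 ≤ h) :
    (h - δ) * (a - b) ≤ g (s + h) - g s ∧ g (s + h) - g s ≤ (h + δ) * (a + b) := by
  have hb : 0 ≤ b := nonneg_of_mul_nonneg_right ((abs_nonneg _).trans (hstep s hs)) hδ
  set n := ⌊h / δ⌋₊
  have hn_le : n * δ ≤ h := (le_div_iff₀ hδ).mp (Nat.floor_le (div_nonneg hh hδ.le))
  have hlt_n : h < (n + 1) * δ := (div_lt_iff₀ hδ).mp (Nat.lt_floor_add_one _)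
  have hmem : ∀ t, 0 ≤ t → s + t ∈ Ici y₀ := fun t ht => le_add_of_le_of_nonneg hs ht
  constructor
  · calc (h - δ) * (a - b) ≤ n * δ * (a - b) := by gcongr; linarith
      _ ≤ g (s + n * δ) - g s := (increment_bounds_natCast_mul hδ.le hstep n hs).1
      _ ≤ g (s + h) - g s := by
        gcongr; exact hg (hmem _ (by positivity)) (hmem _ hh) (by linarith)
  · have hnext := (increment_bounds_natCast_mul hδ.le hstep (n + 1) hs).2
    push_cast at hnext
    calc g (s + h) - g s ≤ g (s + (n + 1) * δ) - g s := by
          gcongr; exact hg (hmem _ hh) (hmem _ (by positivity)) (by linarith)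
      _ ≤ (n + 1) * δ * (a + b) := hnext
      _ ≤ (h + δ) * (a + b) := by gcongr <;> linarith

end IncrementBounds

lemma tendsto_log_comp_exp_add_sub {U : ℝ → ℝ} {γ δ : ℝ} (hU : ∀ᶠ t in atTop, 0 < U t)
    (hRV : Tendsto (fun t => U (t * exp δ) / U t) atTop (𝓝 (exp δ ^ γ))) :
    Tendsto (fun s => log (U (exp (s + δ))) - log (U (exp s))) atTop (𝓝 (δ * γ)) := by
  rw [← exp_mul] at hRV
  have hlog := ((continuousAt_log (exp_ne_zero _)).tendsto.comp hRV).comp tendsto_exp_atTop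
  rw [log_exp] at hlog
  refine hlog.congr' ?_
  filter_upwards [tendsto_exp_atTop.eventually hU,
    (tendsto_exp_atTop.atTop_mul_const (exp_pos δ)).eventually hU] with s hs hsδ
  simp only [Function.comp_apply, exp_add, log_div hsδ.ne' hs.ne']

theorem stmt15 (U : ℝ → ℝ) (γ : ℝ) (hγ : 0 < γ)
    (hmono : Monotone U)
    (hU1 : ∀ᶠ t in atTop, 1 < U t)
    (hRV : ∀ μ : ℝ, 0 < μ →
      Tendsto (fun t => U (t * μ) / U t) atTop (nhds (μ ^ γ))) :
    ∀ ε : ℝ, 0 < ε → ε < min γ 1 →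
      ∃ yε : ℝ, 0 < yε ∧ ∀ y ≥ yε, ∀ l ≥ (1 : ℝ),
        y * (l - 1) * (γ - ε) - ε ≤
            Real.log (U (Real.exp (y * l))) - Real.log (U (Real.exp y)) ∧
          Real.log (U (Real.exp (y * l))) - Real.log (U (Real.exp y)) ≤
            y * (l - 1) * (γ + ε) + ε := by
  intro ε hε hεm
  have hεγ : ε < γ := hεm.trans_le (min_le_left _ _)
  set δ := ε / (2 * γ)
  have hδ : 0 < δ := by positivity
  have hδγ : δ * γ = ε / 2 := by simp only [δ]; field_simp
  have hδ1 : δ ≤ 1 := (div_le_one (by positivity)).mpr (by linarith)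
  have hUpos : ∀ᶠ t in atTop, 0 < U t := hU1.mono fun _ ht => one_pos.trans ht
  have hincr := Metric.tendsto_nhds.mp
    (tendsto_log_comp_exp_add_sub hUpos (hRV _ (exp_pos δ))) (δ * (ε / 2)) (by positivity)
  obtain ⟨T, hT⟩ := eventually_atTop.mp (hincr.and (tendsto_exp_atTop.eventually hUpos))
  refine ⟨max T 1, by positivity, fun y hy l hl => ?_⟩
  have hmonoOn : MonotoneOn (fun s => log (U (exp s))) (Ici (max T 1)) :=
    fun s hs t _ hst => log_le_log (hT s (le_of_max_le_left hs)).2 (hmono (exp_le_exp.mpr hst))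
  have hstep : ∀ s ≥ max T 1, |log (U (exp (s + δ))) - log (U (exp s)) - δ * γ| ≤ δ * (ε / 2) :=
    fun s hs => (hT s (le_of_max_le_left hs)).1.le
  have hh : 0 ≤ y * (l - 1) := by nlinarith [le_of_max_le_right hy]
  obtain ⟨hlow, hup⟩ := hmonoOn.increment_bounds hδ (by linarith) hstep hy hh
  rw [show y + y * (l - 1) = y * l by ring] at hlow hup
  constructor
  · nlinarith [mul_nonneg hh hε.le, mul_pos hδ hε]
  · nlinarith [mul_nonneg hh hε.le, mul_le_of_le_one_left hε.le hδ1]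
end

section
/- Let U be nondecreasing with U(t) → ∞, U ∈ ERV₀(w) (i.e., (U(tλ)−U(t))/w(t) → log λ for all λ > 0, w positive), and assume the GP extrapolation property: for all τ ≥ 1, [U(t) + w(t)·log(t^{τ−1}) − U(t^τ)]/U(t) → 0 as t → ∞ (penultimate GP approximation converges relative to U(t)). Then w(t^λ)/w(t) = 1 + o(max(U(t)/(w(t)log t), 1)) as t → ∞, for every λ ≥ 1. -/
/-!
Write `ε(τ, t)` for the relative error of the GP extrapolation from `t` to `t ^ τ`. Extrapolating
from `t` to `t ^ l` and on to `t ^ (2l)`, versus directly from `t` to `t ^ (2l)`, gives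
`(w (t ^ l) - w t) · l log t = U t · (ε(l, t) - ε(2l, t)) + U (t ^ l) · ε(2, t ^ l)`,
and `U (t ^ l) = O(max (U t) (w t log t))` by the first extrapolation itself. Dividing by
`l · max (U t) (w t log t)` bounds the normalised change of `w` by a combination of three
vanishing errors.
-/

open Filter Real Topology

noncomputable def gpRelError (U w : ℝ → ℝ) (τ t : ℝ) : ℝ :=
  (U t + w t * log (t ^ (τ - 1)) - U (t ^ τ)) / U t

section

variable {U w : ℝ → ℝ} {t : ℝ}

lemma mul_gpRelError (τ : ℝ) (ht : 0 < t) (hU : U t ≠ 0) :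
    U t * gpRelError U w τ t = U t + (τ - 1) * (w t * log t) - U (t ^ τ) := by
  rw [gpRelError, mul_div_cancel₀ _ hU, log_rpow ht]
  ring

lemma sub_mul_log_eq_gpRelError (l : ℝ) (ht : 0 < t) (hU : U t ≠ 0) (hUl : U (t ^ l) ≠ 0) :
    (w (t ^ l) - w t) * (l * log t) =
      U t * (gpRelError U w l t - gpRelError U w (2 * l) t) +
        U (t ^ l) * gpRelError U w 2 (t ^ l) := by
  have e₁ := mul_gpRelError (w := w) l ht hU
  have e₂ := mul_gpRelError (w := w) (2 * l) ht hU
  have e₃ := mul_gpRelError (w := w) 2 (rpow_pos_of_pos ht l) hUl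
  rw [log_rpow ht, ← rpow_mul ht.le, mul_comm l 2] at e₃
  linear_combination e₂ - e₁ - e₃

lemma abs_rpow_le_of_abs_gpRelError_le_one {l : ℝ} (hl : 1 ≤ l) (ht : 0 < t) (hU : 0 < U t)
    (hb : 0 ≤ w t * log t) (hε : |gpRelError U w l t| ≤ 1) :
    |U (t ^ l)| ≤ (l + 1) * max (U t) (w t * log t) := by
  have e := mul_gpRelError (w := w) l ht hU.ne'
  obtain ⟨hε₁, hε₂⟩ := abs_le.mp hε
  have hM₁ := le_max_left (U t) (w t * log t)
  have hM₂ := le_max_right (U t) (w t * log t)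
  rw [abs_le]
  constructor <;> nlinarith

lemma abs_wRatio_sub_one_div_le {l : ℝ} (hl : 1 ≤ l) (ht : 1 < t) (hU : 0 < U t)
    (hUl : U (t ^ l) ≠ 0) (hw : 0 < w t) (hε : |gpRelError U w l t| ≤ 1) :
    |(w (t ^ l) / w t - 1) / max (U t / (w t * log t)) 1| ≤
      (|gpRelError U w l t| + |gpRelError U w (2 * l) t| +
        (l + 1) * |gpRelError U w 2 (t ^ l)|) / l := by
  set ε₁ := gpRelError U w l t
  set ε₂ := gpRelError U w (2 * l) t
  set ε₃ := gpRelError U w 2 (t ^ l)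
  set b := w t * log t
  set M := max (U t) b
  have ht₀ : 0 < t := by linarith
  have hl₀ : 0 < l := by linarith
  have hb : 0 < b := mul_pos hw (log_pos ht)
  have hM : 0 < M := lt_max_of_lt_left hU
  have hUl_le : |U (t ^ l)| ≤ (l + 1) * M :=
    abs_rpow_le_of_abs_gpRelError_le_one hl ht₀ hU hb.le hε
  have hmax : max (U t / b) 1 = M / b := by
    rw [← div_self hb.ne', max_div_div_right hb.le]
  have hquot : (w (t ^ l) / w t - 1) / max (U t / b) 1 =
      (U t * (ε₁ - ε₂) + U (t ^ l) * ε₃) / (l * M) := by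
    rw [hmax, ← sub_mul_log_eq_gpRelError l ht₀ hU.ne' hUl]
    field_simp
    ring
  have hnum : |U t * (ε₁ - ε₂) + U (t ^ l) * ε₃| ≤
      M * (|ε₁| + |ε₂| + (l + 1) * |ε₃|) :=
    calc |U t * (ε₁ - ε₂) + U (t ^ l) * ε₃|
        ≤ |U t| * (|ε₁| + |ε₂|) + |U (t ^ l)| * |ε₃| := by
          grw [abs_add_le, abs_mul, abs_mul, abs_sub]
      _ ≤ M * (|ε₁| + |ε₂|) + (l + 1) * M * |ε₃| := by
          rw [abs_of_pos hU]
          gcongr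
          exact le_max_left _ _
      _ = M * (|ε₁| + |ε₂| + (l + 1) * |ε₃|) := by ring
  rw [hquot, abs_div, abs_of_pos (mul_pos hl₀ hM)]
  calc |U t * (ε₁ - ε₂) + U (t ^ l) * ε₃| / (l * M)
      ≤ M * (|ε₁| + |ε₂| + (l + 1) * |ε₃|) / (l * M) := by gcongr
    _ = (|ε₁| + |ε₂| + (l + 1) * |ε₃|) / l := by field_simp

end

theorem stmt16_general (U w : ℝ → ℝ)
    (hinf : Tendsto U atTop atTop)
    (hwpos : ∀ t, 0 < w t)
    (hGP : ∀ τ : ℝ, 1 ≤ τ →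
      Tendsto
        (fun t => (U t + w t * Real.log (t ^ (τ - 1)) - U (t ^ τ)) / U t)
        atTop (nhds 0)) :
    ∀ l : ℝ, 1 ≤ l →
      Tendsto
        (fun t => (w (t ^ l) / w t - 1) / max (U t / (w t * Real.log t)) 1)
        atTop (nhds 0) := by
  intro l hl
  have hε : ∀ τ : ℝ, 1 ≤ τ → Tendsto (gpRelError U w τ) atTop (𝓝 0) := hGP
  have hpow : Tendsto (fun t : ℝ => t ^ l) atTop atTop := tendsto_rpow_atTop (by linarith)
  have hbound : Tendsto (fun t => (|gpRelError U w l t| + |gpRelError U w (2 * l) t| +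
      (l + 1) * |gpRelError U w 2 (t ^ l)|) / l) atTop (𝓝 0) := by
    simpa using ((((hε l hl).abs.add (hε (2 * l) (by linarith)).abs).add
      (((hε 2 one_le_two).comp hpow).abs.const_mul (l + 1))).div_const l)
  refine squeeze_zero_norm' ?_ hbound
  filter_upwards [eventually_gt_atTop 1, hinf.eventually_gt_atTop 0,
    hpow.eventually (hinf.eventually_ne_atTop 0),
    (hε l hl).abs.eventually_lt_const (by simp : |(0 : ℝ)| < 1)] with t ht hU hUl hε₁
  exact abs_wRatio_sub_one_div_le hl ht hU hUl (hwpos t) hε₁.le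

theorem stmt16 (U w : ℝ → ℝ)
    (hmono : Monotone U)
    (hinf : Tendsto U atTop atTop)
    (hwpos : ∀ t, 0 < w t)
    (hERV0 : ∀ l : ℝ, 0 < l →
      Tendsto (fun t => (U (t * l) - U t) / w t) atTop (nhds (Real.log l)))
    (hGP : ∀ τ : ℝ, 1 ≤ τ →
      Tendsto
        (fun t => (U t + w t * Real.log (t ^ (τ - 1)) - U (t ^ τ)) / U t)
        atTop (nhds 0)) :
    ∀ l : ℝ, 1 ≤ l →
      Tendsto
        (fun t => (w (t ^ l) / w t - 1) / max (U t / (w t * Real.log t)) 1)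
        atTop (nhds 0) :=
  stmt16_general U w hinf hwpos hGP
end

section
/- Let U be nondecreasing with U(t) → ∞ and U ∈ ERV₀(w), and suppose for all τ ≥ 1 that [U(t)+(τ−1)w(t)log t − U(t^τ)]/U(t) → 0 as t → ∞. Then exactly one of the following holds: (i) U(t^λ)/U(t) → λ for all λ > 0 (i.e., q := U∘exp is regularly varying with index 1), or (ii) U(t^λ)/U(t) → 1 for all λ > 0 (i.e., q is slowly varying). -/
/-!
Write `A(t) = w(t) log t / U(t)`, so that the hypothesis reads
`U(t^τ)/U(t) = 1 + (τ - 1) A(t) + o(1)` for `τ ≥ 1`. Comparing `τ = 4` with `τ = 2` applied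
at `t` and at `t²` gives `A(t²) = 2A(t)/(1 + A(t)) + o(1)`. The map `a ↦ 2a/(1 + a)` expands
near its fixed point `0` and contracts near its fixed point `1`, so `A → 0` if `A` eventually
stays below `1/4`, and `A → 1` if `A` eventually stays above a positive constant. If
`A(t) ≥ 1/4` for arbitrarily large `t`, the same holds along the orbit `t, t², t⁴, …`, and
monotonicity of `U` spreads the bound `A ≥ 1/10` over the intervals `[t, t²]` between
consecutive points of the orbit. Finally `A → ρ ∈ {0, 1}` gives
`U(t^τ)/U(t) → 1 + (τ - 1)ρ = τ^ρ`, first for `τ ≥ 1` and then, substituting `s = t^τ`,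
for every `τ > 0`.
-/

open Filter Real Topology Set

lemma tendsto_sub_div_of_tendsto_mul_sub {α : Type*} {l : Filter α} {x y p r : α → ℝ} {C : ℝ}
    (hp : ∀ᶠ i in l, 1 ≤ p i) (hrp : ∀ᶠ i in l, |r i / p i| ≤ C)
    (hx : Tendsto (fun i => x i - p i) l (𝓝 0))
    (hxy : Tendsto (fun i => x i * y i - r i) l (𝓝 0)) :
    Tendsto (fun i => y i - r i / p i) l (𝓝 0) := by
  have hx_half : ∀ᶠ i in l, 1 / 2 ≤ x i := by
    filter_upwards [hp, hx.eventually (eventually_abs_sub_lt 0 (by norm_num : (0:ℝ) < 1 / 2))]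
      with i hpi hxi
    linarith [(abs_lt.1 hxi).1]
  have hnum : Tendsto (fun i => (x i * y i - r i) - r i / p i * (x i - p i)) l (𝓝 0) := by
    simpa using hxy.sub (isBoundedUnder_le_mul_tendsto_zero
      (isBoundedUnder_of_eventually_le (a := C) hrp) hx)
  have hinv : IsBoundedUnder (· ≤ ·) l (fun i => ‖(x i)⁻¹‖) := by
    refine isBoundedUnder_of_eventually_le (a := 2) ?_
    filter_upwards [hx_half] with i hi
    rw [norm_inv, Real.norm_of_nonneg (by linarith)]
    exact inv_le_of_inv_le₀ (by norm_num) (by linarith)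
  refine (hnum.zero_mul_isBoundedUnder_le hinv).congr' ?_
  filter_upwards [hp, hx_half] with i hpi hxi
  field_simp
  ring

lemma tendsto_zero_of_le_mul_comp_add {α : Type*} {l : Filter α} {s : α → α} {φ : α → ℝ}
    {κ C : ℝ} (hs : Tendsto s l l) (hκ0 : 0 ≤ κ) (hκ1 : κ < 1) (hφ0 : ∀ᶠ i in l, 0 ≤ φ i)
    (hφC : ∀ᶠ i in l, φ i ≤ C) (hφ : ∀ ε > 0, ∀ᶠ i in l, φ i ≤ κ * φ (s i) + ε) :
    Tendsto φ l (𝓝 0) := by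
  refine tendsto_order.2 ⟨fun a ha => hφ0.mono fun i hi => ha.trans_le hi, fun η hη => ?_⟩
  have hε : 0 < (1 - κ) * η / 2 := by nlinarith
  have hiter : ∀ n : ℕ, ∀ᶠ i in l, φ i ≤ κ ^ n * |C| + η / 2 := by
    intro n
    induction n with
    | zero => exact hφC.mono fun i hi => by linarith [le_abs_self C, pow_zero κ]
    | succ n ih =>
      filter_upwards [hs.eventually ih, hφ _ hε] with i hsi hi
      calc φ i ≤ κ * φ (s i) + (1 - κ) * η / 2 := hi
        _ ≤ κ * (κ ^ n * |C| + η / 2) + (1 - κ) * η / 2 := by gcongr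
        _ = κ ^ (n + 1) * |C| + η / 2 := by ring
  obtain ⟨n, hn⟩ := exists_pow_lt_of_lt_one (by positivity : 0 < η / 2 / (|C| + 1)) hκ1
  have hsmall : κ ^ n * |C| < η / 2 := by
    rw [lt_div_iff₀ (by positivity)] at hn
    nlinarith [pow_nonneg hκ0 n, abs_nonneg C]
  filter_upwards [hiter n] with i hi
  linarith

lemma eventually_of_frequently_of_forall_Icc_sq {P Q : ℝ → Prop} (hP : ∃ᶠ t in atTop, P t)
    (hPsq : ∀ᶠ t in atTop, P t → P (t ^ 2))
    (hQ : ∀ᶠ t in atTop, P t → ∀ u ∈ Icc t (t ^ 2), Q u) :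
    ∀ᶠ u in atTop, Q u := by
  obtain ⟨T, hT⟩ := eventually_atTop.1 ((hPsq.and hQ).and (eventually_ge_atTop 2))
  obtain ⟨t₀, ht₀T, hPt₀⟩ := frequently_atTop.1 hP T
  have ht₀ : 1 ≤ t₀ := by linarith [(hT t₀ ht₀T).2]
  have horbit_ge (n : ℕ) : t₀ ≤ t₀ ^ 2 ^ n := le_self_pow₀ ht₀ (by positivity)
  have horbit_succ (n : ℕ) : t₀ ^ 2 ^ (n + 1) = (t₀ ^ 2 ^ n) ^ 2 := by
    rw [pow_succ, pow_mul]
  have hPorbit (n : ℕ) : P (t₀ ^ 2 ^ n) := by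
    induction n with
    | zero => simpa using hPt₀
    | succ n ih => rw [horbit_succ]; exact (hT _ (ht₀T.trans (horbit_ge n))).1.1 ih
  have hQorbit (n : ℕ) : ∀ u ∈ Icc t₀ (t₀ ^ 2 ^ n), Q u := by
    induction n with
    | zero =>
      intro u ⟨hu₁, hu₂⟩
      rw [pow_zero, pow_one] at hu₂
      exact (hT t₀ ht₀T).1.2 hPt₀ u ⟨hu₁, by nlinarith⟩
    | succ n ih =>
      intro u hu
      rcases le_total u (t₀ ^ 2 ^ n) with hle | hge
      · exact ih u ⟨hu.1, hle⟩
      · rw [horbit_succ] at hu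
        exact (hT _ (ht₀T.trans (horbit_ge n))).1.2 (hPorbit n) u ⟨hge, hu.2⟩
  filter_upwards [eventually_ge_atTop t₀] with u hu
  obtain ⟨n, hn⟩ := pow_unbounded_of_one_lt u (by linarith [(hT t₀ ht₀T).2] : 1 < t₀)
  exact hQorbit n u ⟨hu, hn.le.trans (pow_le_pow_right₀ ht₀ Nat.lt_two_pow_self.le)⟩

namespace SquaringRecursion

variable {A : ℝ → ℝ}

lemma tendsto_sub_comp_sqrt
    (hrec : Tendsto (fun t => A (t ^ 2) - 2 * A t / (1 + A t)) atTop (𝓝 0)) :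
    Tendsto (fun u => A u - 2 * A √u / (1 + A √u)) atTop (𝓝 0) := by
  refine (hrec.comp tendsto_sqrt_atTop).congr' ?_
  filter_upwards [eventually_ge_atTop 0] with u hu
  simp [sq_sqrt hu]

lemma eventually_quarter_le_sq
    (hrec : Tendsto (fun t => A (t ^ 2) - 2 * A t / (1 + A t)) atTop (𝓝 0)) :
    ∀ᶠ t in atTop, 1 / 4 ≤ A t → 1 / 4 ≤ A (t ^ 2) := by
  filter_upwards [hrec.eventually (eventually_abs_sub_lt 0 (by norm_num : (0:ℝ) < 3 / 20))]
    with t ht hA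
  have : 2 / 5 ≤ 2 * A t / (1 + A t) := by
    rw [le_div_iff₀ (by linarith)]
    linarith
  linarith [(abs_lt.1 ht).1]

lemma tendsto_zero_of_eventually_le
    (hrec : Tendsto (fun t => A (t ^ 2) - 2 * A t / (1 + A t)) atTop (𝓝 0))
    {c : ℝ} (hc : c < 1) (hA0 : ∀ᶠ t in atTop, 0 ≤ A t)
    (hA : ∀ᶠ t in atTop, A t ≤ c) : Tendsto A atTop (𝓝 0) := by
  obtain ⟨t₀, ht₀, ht₀c⟩ := (hA0.and hA).exists
  refine tendsto_zero_of_le_mul_comp_add (tendsto_pow_atTop two_ne_zero)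
    (by linarith : 0 ≤ (1 + c) / 2) (by linarith) hA0 hA fun ε hε => ?_
  filter_upwards [hA0, hA, hrec.eventually (eventually_abs_sub_lt 0 hε)] with t h0 hc' hε'
  -- on `[0, c]` the map `a ↦ 2a/(1+a)` expands by the factor `2/(1+c) > 1`
  have hexp : A t ≤ (1 + c) / 2 * (2 * A t / (1 + A t)) := by
    rw [mul_div_assoc', le_div_iff₀ (by linarith)]
    nlinarith
  nlinarith [(abs_lt.1 hε').1]

lemma tendsto_one_of_eventually_ge
    (hrec : Tendsto (fun t => A (t ^ 2) - 2 * A t / (1 + A t)) atTop (𝓝 0))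
    {c : ℝ} (hc : 0 < c) (hA : ∀ᶠ t in atTop, c ≤ A t) :
    Tendsto A atTop (𝓝 1) := by
  have hdist (b : ℝ) (hb : c ≤ b) :
      |2 * b / (1 + b) - 1| ≤ 1 ∧ |2 * b / (1 + b) - 1| ≤ (1 + c)⁻¹ * |b - 1| := by
    have h1b : 0 < 1 + b := by linarith
    rw [show 2 * b / (1 + b) - 1 = (b - 1) / (1 + b) by field_simp; ring, abs_div,
      abs_of_pos h1b, ← div_eq_inv_mul]
    exact ⟨div_le_one_of_le₀ (abs_le.2 ⟨by linarith, by linarith⟩) h1b.le,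
      div_le_div_of_nonneg_left (abs_nonneg _) (by linarith) (by linarith)⟩
  have hclose (ε : ℝ) (hε : 0 < ε) : ∀ᶠ u in atTop,
      c ≤ A √u ∧ |A u - 1| < ε + |2 * A √u / (1 + A √u) - 1| := by
    filter_upwards [tendsto_sqrt_atTop.eventually hA,
      (tendsto_sub_comp_sqrt hrec).eventually (eventually_abs_sub_lt 0 hε)] with u hu h
    rw [sub_zero] at h
    exact ⟨hu, by linarith [abs_sub_le (A u) (2 * A √u / (1 + A √u)) 1]⟩
  rw [tendsto_iff_norm_sub_tendsto_zero]
  simp only [Real.norm_eq_abs]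
  refine tendsto_zero_of_le_mul_comp_add (κ := (1 + c)⁻¹) (C := 2) tendsto_sqrt_atTop
    (by positivity) (inv_lt_one_of_one_lt₀ (by linarith)) (.of_forall fun u => abs_nonneg _)
    ((hclose 1 one_pos).mono fun u ⟨hu, h⟩ => by linarith [(hdist _ hu).1])
    fun ε hε => (hclose ε hε).mono fun u ⟨hu, h⟩ => by linarith [(hdist _ hu).2]

end SquaringRecursion

section GPExpansion

variable {U A : ℝ → ℝ}

lemma tendsto_sq_sub_of_tendsto_rpow_div (hUpos : ∀ᶠ t in atTop, 0 < U t)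
    (hA0 : ∀ᶠ t in atTop, 0 ≤ A t)
    (hE : ∀ τ : ℝ, 1 ≤ τ →
      Tendsto (fun t => U (t ^ τ) / U t - (1 + (τ - 1) * A t)) atTop (𝓝 0)) :
    Tendsto (fun t => A (t ^ 2) - 2 * A t / (1 + A t)) atTop (𝓝 0) := by
  have h2 : Tendsto (fun t => U (t ^ 2) / U t - (1 + A t)) atTop (𝓝 0) := by
    have := hE 2 one_le_two
    norm_num [Real.rpow_ofNat] at this
    exact this
  have h4 : Tendsto (fun t => U (t ^ 4) / U t - (1 + 3 * A t)) atTop (𝓝 0) := by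
    have := hE 4 (by norm_num)
    norm_num [Real.rpow_ofNat] at this
    exact this
  have h2sq := h2.comp (tendsto_pow_atTop two_ne_zero)
  have hUsq := (tendsto_pow_atTop two_ne_zero).eventually hUpos
  -- `U(t⁴)/U(t)` factors as `U(t²)/U(t) · U(t⁴)/U(t²)`
  have hfactor := tendsto_sub_div_of_tendsto_mul_sub (C := 3)
    (x := fun t => U (t ^ 2) / U t) (y := fun t => U ((t ^ 2) ^ 2) / U (t ^ 2))
    (p := fun t => 1 + A t) (r := fun t => 1 + 3 * A t)
    (hA0.mono fun t ht => by linarith)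
    (hA0.mono fun t ht => by
      rw [abs_le, le_div_iff₀ (by linarith), div_le_iff₀ (by linarith)]
      constructor <;> linarith)
    h2 (h4.congr' (by
      filter_upwards [hUpos, hUsq] with t ht ht2
      simp only [← pow_mul]
      field_simp))
  have := (h2sq.sub hfactor).neg
  rw [sub_zero, neg_zero] at this
  refine this.congr' ?_
  filter_upwards [hA0] with t ht
  simp only [Function.comp_apply]
  field_simp
  ring

lemma eventually_forall_Icc_tenth_le (hU : Monotone U) (hUpos : ∀ᶠ t in atTop, 0 < U t)
    (hE : ∀ τ : ℝ, 1 ≤ τ →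
      Tendsto (fun t => U (t ^ τ) / U t - (1 + (τ - 1) * A t)) atTop (𝓝 0)) :
    ∀ᶠ t in atTop, 1 / 4 ≤ A t → ∀ u ∈ Icc t (t ^ 2), 1 / 10 ≤ A u := by
  have hbounds (τ : ℝ) (hτ : 1 ≤ τ) : ∀ᶠ t in atTop,
      (1 + (τ - 1) * A t - 1 / 1000) * U t < U (t ^ τ) ∧
        U (t ^ τ) < (1 + (τ - 1) * A t + 1 / 1000) * U t := by
    filter_upwards [hUpos,
      (hE τ hτ).eventually (eventually_abs_sub_lt 0 (by norm_num : (0:ℝ) < 1 / 1000))]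
      with t hpos h
    rw [sub_zero, abs_lt, lt_sub_iff_add_lt, sub_lt_iff_lt_add, lt_div_iff₀ hpos,
      div_lt_iff₀ hpos] at h
    constructor <;> linarith
  filter_upwards [hbounds (3 / 2) (by norm_num), hbounds 2 one_le_two, hbounds 3 (by norm_num),
    eventually_forall_ge_atTop.2 (hbounds 2 one_le_two),
    eventually_forall_ge_atTop.2 hUpos, eventually_ge_atTop 1]
    with t h32 h2 h3 h2u hUu ht1 ha u ⟨htu, hut⟩
  norm_num at h32 h2 h3 h2u
  have ht0 : 0 ≤ t := by linarith
  have hUt := hUu t le_rfl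
  have hsandwich (x y lo hi : ℝ) (hx : x ≤ u ^ 2) (hy : u ≤ y) (hlo : lo * U t < U x)
      (hhi : U y < hi * U t) : lo < (1 + A u + 1 / 1000) * hi := by
    have hUu0 := hUu u htu
    have hU2 := (h2u u htu).2
    have hpos : 0 < 1 + A u + 1 / 1000 := by
      have := hU (le_self_pow₀ (ht1.trans htu) two_ne_zero)
      by_contra hneg
      nlinarith
    refine lt_of_mul_lt_mul_right ?_ hUt.le
    calc lo * U t < U x := hlo
      _ ≤ U (u ^ 2) := hU hx
      _ ≤ (1 + A u + 1 / 1000) * U u := hU2.le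
      _ ≤ (1 + A u + 1 / 1000) * U y := by gcongr; exact hU hy
      _ ≤ (1 + A u + 1 / 1000) * (hi * U t) := by gcongr
      _ = (1 + A u + 1 / 1000) * hi * U t := by ring
  -- `U(u²)/U(u)` is at least `U(t²)/U(t^(3/2))` if `u ≤ t^(3/2)`, and at least `U(t³)/U(t²)`
  -- otherwise; both exceed `1.1` when `A(t) ≥ 1/4`
  by_contra! hAu
  rcases le_total u (t ^ (3 / 2 : ℝ)) with hu | hu
  · have := hsandwich _ _ _ _ (pow_le_pow_left₀ ht0 htu 2) hu h2.1 h32.2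
    nlinarith
  · have hcube : t ^ 3 ≤ u ^ 2 := by
      calc t ^ 3 = (t ^ (3 / 2 : ℝ)) ^ 2 := by
            rw [← Real.rpow_mul_natCast ht0]; norm_num
        _ ≤ u ^ 2 := pow_le_pow_left₀ (by positivity) hu 2
    have := hsandwich _ _ _ _ hcube hut h3.1 h2.2
    nlinarith

lemma tendsto_rpow_div_of_tendsto (hE : ∀ τ : ℝ, 1 ≤ τ →
      Tendsto (fun t => U (t ^ τ) / U t - (1 + (τ - 1) * A t)) atTop (𝓝 0))
    {c : ℝ} (hA : Tendsto A atTop (𝓝 c)) {τ : ℝ} (hτ : 1 ≤ τ) :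
    Tendsto (fun t => U (t ^ τ) / U t) atTop (𝓝 (1 + (τ - 1) * c)) := by
  simpa using (hE τ hτ).add ((hA.const_mul (τ - 1)).const_add 1)

end GPExpansion

lemma tendsto_rpow_div_of_forall_one_le {V : ℝ → ℝ} {ρ : ℝ}
    (hV : ∀ τ : ℝ, 1 ≤ τ → Tendsto (fun t => V (t ^ τ) / V t) atTop (𝓝 (τ ^ ρ)))
    {τ : ℝ} (hτ : 0 < τ) : Tendsto (fun t => V (t ^ τ) / V t) atTop (𝓝 (τ ^ ρ)) := by
  rcases le_or_gt 1 τ with hτ1 | hτ1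
  · exact hV τ hτ1
  have hinv := ((hV τ⁻¹ (one_le_inv₀ hτ |>.2 hτ1.le)).comp (tendsto_rpow_atTop hτ)).inv₀
    (by positivity)
  rw [Real.inv_rpow hτ.le, inv_inv] at hinv
  refine hinv.congr' ?_
  filter_upwards [eventually_ge_atTop 0] with t ht
  simp [Real.rpow_rpow_inv ht hτ.ne']

lemma tendsto_rpow_div_sub_of_gp {U w : ℝ → ℝ} (hinf : Tendsto U atTop atTop)
    (hGP : ∀ τ : ℝ, 1 ≤ τ →
      Tendsto (fun t => (U t + (τ - 1) * (w t * Real.log t) - U (t ^ τ)) / U t) atTop (𝓝 0))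
    (τ : ℝ) (hτ : 1 ≤ τ) :
    Tendsto (fun t => U (t ^ τ) / U t - (1 + (τ - 1) * (w t * Real.log t / U t)))
      atTop (𝓝 0) := by
  have := (hGP τ hτ).neg
  rw [neg_zero] at this
  refine this.congr' ?_
  filter_upwards [hinf.eventually_gt_atTop 0] with t ht
  field_simp
  ring

theorem stmt17_general (U w : ℝ → ℝ)
    (hmono : Monotone U)
    (hinf : Tendsto U atTop atTop)
    (hwpos : ∀ t, 0 < w t)
    (hGP : ∀ τ : ℝ, 1 ≤ τ →
      Tendsto
        (fun t => (U t + (τ - 1) * (w t * Real.log t) - U (t ^ τ)) / U t)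
        atTop (nhds 0)) :
    Xor'
      (∀ l : ℝ, 0 < l → Tendsto (fun t => U (t ^ l) / U t) atTop (nhds l))
      (∀ l : ℝ, 0 < l → Tendsto (fun t => U (t ^ l) / U t) atTop (nhds 1)) := by
  set A : ℝ → ℝ := fun t => w t * Real.log t / U t
  have hUpos : ∀ᶠ t in atTop, 0 < U t := hinf.eventually_gt_atTop 0
  have hA0 : ∀ᶠ t in atTop, 0 ≤ A t := by
    filter_upwards [hUpos, eventually_ge_atTop 1] with t hU ht
    exact div_nonneg (mul_nonneg (hwpos t).le (Real.log_nonneg ht)) hU.le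
  have hE := tendsto_rpow_div_sub_of_gp hinf hGP
  have hrec := tendsto_sq_sub_of_tendsto_rpow_div hUpos hA0 hE
  have hindex (ρ : ℝ) (hρ : Tendsto A atTop (𝓝 ρ)) (hρ01 : ∀ τ : ℝ, 1 + (τ - 1) * ρ = τ ^ ρ)
      (τ : ℝ) (hτ : 0 < τ) : Tendsto (fun t => U (t ^ τ) / U t) atTop (𝓝 (τ ^ ρ)) :=
    tendsto_rpow_div_of_forall_one_le
      (fun σ hσ => hρ01 σ ▸ tendsto_rpow_div_of_tendsto hE hρ hσ) hτ
  have hne : (2:ℝ) ≠ 1 := by norm_num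
  by_cases hfreq : ∃ᶠ t in atTop, 1 / 4 ≤ A t
  · have hA1 := SquaringRecursion.tendsto_one_of_eventually_ge hrec (by norm_num)
      (eventually_of_frequently_of_forall_Icc_sq hfreq
        (SquaringRecursion.eventually_quarter_le_sq hrec)
        (eventually_forall_Icc_tenth_le hmono hUpos hE))
    have hP := hindex 1 hA1 (by simp)
    simp only [Real.rpow_one] at hP
    exact Or.inl ⟨hP, fun hQ => hne (tendsto_nhds_unique (hP 2 two_pos) (hQ 2 two_pos))⟩
  · have hA0' := SquaringRecursion.tendsto_zero_of_eventually_le hrec (c := 1 / 4)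
      (by norm_num) hA0 ((not_frequently.1 hfreq).mono fun t ht => (not_le.1 ht).le)
    have hQ := hindex 0 hA0' (by simp)
    simp only [Real.rpow_zero] at hQ
    exact Or.inr ⟨hQ, fun hP => hne (tendsto_nhds_unique (hP 2 two_pos) (hQ 2 two_pos))⟩

theorem stmt17 (U w : ℝ → ℝ)
    (hmono : Monotone U)
    (hinf : Tendsto U atTop atTop)
    (hwpos : ∀ t, 0 < w t)
    (hERV0 : ∀ l : ℝ, 0 < l →
      Tendsto (fun t => (U (t * l) - U t) / w t) atTop (nhds (Real.log l)))
    (hGP : ∀ τ : ℝ, 1 ≤ τ →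
      Tendsto
        (fun t => (U t + (τ - 1) * (w t * Real.log t) - U (t ^ τ)) / U t)
        atTop (nhds 0)) :
    Xor'
      (∀ l : ℝ, 0 < l → Tendsto (fun t => U (t ^ l) / U t) atTop (nhds l))
      (∀ l : ℝ, 0 < l → Tendsto (fun t => U (t ^ l) / U t) atTop (nhds 1)) :=
  stmt17_general U w hmono hinf hwpos hGP
end

section
/- Let k₂ : ℕ → ℕ be nondecreasing with k₂(n) ∈ {1,…,n−1}, limsup_{n→∞} (log k₂(n))/log n = c < 1, and k₂(n)/n → 0. For ι > 1 and j ∈ {0,1} define k_j(n) := ⌊(k₂(n)/n)^{ι^{j−2}} · n⌋ and y_n := log(n/k₀(n)). Then liminf_{n→∞} y_n / log n = (1−c)·ι^{-2} > 0, and consequently for every T ≥ 1 and every λ > T·ι²/(1−c), eventually [T^{-1} log n, T log n] ⊆ [y_n/λ, y_n·λ]. -/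
/-! Write `a = ι⁻²`. Then `k₀(n) = ⌊xₙ⌋₊` with `log n - log xₙ = a (log n - log k₂(n))` and
`xₙ ≥ k₂(n) ≥ 1`, so taking the floor costs at most `log 2`. Hence
`yₙ / log n = a (1 - log k₂(n) / log n) + O(1 / log n)`, and since `t ↦ a (1 - t)` is continuous
and antitone, the liminf of `yₙ / log n` is `a (1 - c)`. The inclusion of intervals follows from
`T / λ < a (1 - c)` together with `0 ≤ yₙ ≤ log n`. -/

open Filter Real Topology Set

lemma Filter.liminf_add_of_tendsto_zero {ι : Type*} {F : Filter ι} [F.NeBot] {u e : ι → ℝ}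
    (hu_ge : IsBoundedUnder (· ≥ ·) F u) (hu_le : IsBoundedUnder (· ≤ ·) F u)
    (he : Tendsto e F (𝓝 0)) : liminf (u + e) F = liminf u F := by
  refine le_antisymm ?_ ?_
  · simpa [add_comm, he.limsup_eq] using
      liminf_add_le he.isBoundedUnder_ge he.isBoundedUnder_le hu_ge hu_le.isCoboundedUnder_ge
  · simpa [he.liminf_eq] using
      le_liminf_add hu_ge hu_le he.isBoundedUnder_ge he.isCoboundedUnder_ge

lemma Filter.liminf_eq_mul_one_sub_limsup {ι : Type*} {F : Filter ι} [F.NeBot] {u v : ι → ℝ}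
    {a : ℝ} (ha : 0 ≤ a) (hu_ge : IsBoundedUnder (· ≥ ·) F u)
    (hu_le : IsBoundedUnder (· ≤ ·) F u)
    (hv : Tendsto (fun i => v i - a * (1 - u i)) F (𝓝 0)) :
    liminf v F = a * (1 - limsup u F) := by
  have hanti : Antitone fun t : ℝ => a * (1 - t) := fun _ _ hst =>
    mul_le_mul_of_nonneg_left (by linarith) ha
  have hsplit : v = (fun t => a * (1 - t)) ∘ u + fun i => v i - a * (1 - u i) := by
    ext; simp
  rw [hsplit, liminf_add_of_tendsto_zero (hanti.isBoundedUnder_ge_comp hu_le)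
    (hanti.isBoundedUnder_le_comp hu_ge) hv]
  exact (hanti.map_limsup_of_continuousAt u (by fun_prop) hu_le hu_ge.isCoboundedUnder_le).symm

lemma one_le_div_rpow_mul {k n a : ℝ} (hk : 1 ≤ k) (hkn : k ≤ n) (ha : a ≤ 1) :
    1 ≤ (k / n) ^ a * n := by
  have hn : 0 < n := by linarith
  calc 1 ≤ (k / n) ^ (1 : ℝ) * n := by rw [rpow_one, div_mul_cancel₀ _ hn.ne']; exact hk
    _ ≤ (k / n) ^ a * n := mul_le_mul_of_nonneg_right
      (rpow_le_rpow_of_exponent_ge (by positivity) ((div_le_one hn).2 hkn) ha) hn.le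

lemma log_sub_log_div_rpow_mul {k n : ℝ} (a : ℝ) (hk : 0 < k) (hn : 0 < n) :
    log n - log ((k / n) ^ a * n) = a * (log n - log k) := by
  rw [log_mul (by positivity) hn.ne', log_rpow (by positivity), log_div hk.ne' hn.ne']
  ring

lemma log_div_floor_rpow_mul_mem_Icc {k n a : ℝ} (hk : 1 ≤ k) (hkn : k ≤ n) (ha₀ : 0 ≤ a)
    (ha₁ : a ≤ 1) : log (n / ⌊(k / n) ^ a * n⌋₊) ∈ Icc 0 (log n) := by
  have hn : 0 < n := by linarith
  set x := (k / n) ^ a * n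
  have hx : 1 ≤ x := one_le_div_rpow_mul hk hkn ha₁
  have hxn : x ≤ n := mul_le_of_le_one_left hn.le
    (rpow_le_one (by positivity) ((div_le_one hn).2 hkn) ha₀)
  have hm : (1 : ℝ) ≤ ⌊x⌋₊ := by exact_mod_cast (Nat.one_le_floor_iff x).2 hx
  have hmn : (⌊x⌋₊ : ℝ) ≤ n := (Nat.floor_le (by positivity)).trans hxn
  rw [log_div hn.ne' (by positivity)]
  exact ⟨sub_nonneg.2 (log_le_log (by positivity) hmn), by linarith [log_nonneg hm]⟩

lemma log_div_floor_rpow_mul_sub_mem_Icc {k n a : ℝ} (hk : 1 ≤ k) (hkn : k ≤ n) (ha : a ≤ 1) :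
    log (n / ⌊(k / n) ^ a * n⌋₊) - a * (log n - log k) ∈ Icc 0 (log 2) := by
  have hn : 0 < n := by linarith
  set x := (k / n) ^ a * n
  have hx : 1 ≤ x := one_le_div_rpow_mul hk hkn ha
  have hm : x / 2 < ⌊x⌋₊ := Nat.div_two_lt_floor hx
  have hfloor_le : log ⌊x⌋₊ ≤ log x := log_le_log (by linarith) (Nat.floor_le (by positivity))
  have hfloor_ge : log x - log 2 ≤ log ⌊x⌋₊ := by
    rw [← log_div (by positivity) two_ne_zero]
    exact log_le_log (by positivity) hm.le
  rw [← log_sub_log_div_rpow_mul a (by linarith) hn, log_div hn.ne' (by linarith)]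
  constructor <;> linarith

lemma tendsto_log_div_floor_div_log_sub {k : ℕ → ℕ} {a : ℝ}
    (hk : ∀ᶠ n in atTop, 1 ≤ k n ∧ k n ≤ n) (ha : a ≤ 1) :
    Tendsto (fun n : ℕ => log (n / ⌊((k n : ℝ) / n) ^ a * n⌋₊) / log n
      - a * (1 - log (k n) / log n)) atTop (𝓝 0) := by
  have hlog : Tendsto (fun n : ℕ => log 2 / log n) atTop (𝓝 0) :=
    tendsto_const_nhds.div_atTop (tendsto_log_atTop.comp tendsto_natCast_atTop_atTop)
  have hbound : ∀ᶠ n : ℕ in atTop, log (n / ⌊((k n : ℝ) / n) ^ a * n⌋₊) / log n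
      - a * (1 - log (k n) / log n) ∈ Icc 0 (log 2 / log n) := by
    filter_upwards [hk, eventually_ge_atTop 2] with n ⟨hk1, hkn⟩ hn
    have hlogn : 0 < log n := log_pos (by exact_mod_cast hn)
    obtain ⟨hδ₀, hδ₁⟩ := log_div_floor_rpow_mul_sub_mem_Icc (k := k n) (n := n) (a := a)
      (by exact_mod_cast hk1) (by exact_mod_cast hkn) ha
    have heq : log (n / ⌊((k n : ℝ) / n) ^ a * n⌋₊) / log n - a * (1 - log (k n) / log n)
        = (log (n / ⌊((k n : ℝ) / n) ^ a * n⌋₊) - a * (log n - log (k n))) / log n := by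
      field_simp
    rw [heq]
    exact ⟨div_nonneg hδ₀ hlogn.le, div_le_div_of_nonneg_right hδ₁ hlogn.le⟩
  exact tendsto_of_tendsto_of_tendsto_of_le_of_le' tendsto_const_nhds hlog
    (hbound.mono fun _ h => h.1) (hbound.mono fun _ h => h.2)

lemma log_div_log_mem_Icc {k n : ℝ} (hk : 1 ≤ k) (hkn : k ≤ n) : log k / log n ∈ Icc 0 1 :=
  ⟨div_nonneg (log_nonneg hk) (log_nonneg (hk.trans hkn)),
    div_le_one_of_le₀ (log_le_log (by linarith) hkn) (log_nonneg (hk.trans hkn))⟩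

lemma Icc_inv_mul_subset_Icc_div_mul {L y T lam : ℝ} (hL : 0 < L) (hyL : y ≤ L) (hT : 0 < T)
    (hTlam : T ≤ lam) (hlt : T / lam < y / L) :
    Icc (T⁻¹ * L) (T * L) ⊆ Icc (y / lam) (y * lam) := by
  have hlam : 0 < lam := hT.trans_le hTlam
  refine Icc_subset_Icc ?_ ((div_lt_div_iff₀ hlam hL).1 hlt).le
  calc y / lam ≤ L / T := div_le_div₀ hL.le hyL hT hTlam
    _ = T⁻¹ * L := by rw [div_eq_inv_mul]

lemma div_lt_one_sub_mul_rpow_neg_two {T lam c ι : ℝ} (hc : c < 1) (hι : 0 < ι) (hlam : 0 < lam)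
    (h : T * ι ^ 2 / (1 - c) < lam) : T / lam < (1 - c) * ι ^ (-2 : ℝ) := by
  rw [rpow_neg hι.le, rpow_two, ← div_eq_mul_inv, div_lt_div_iff₀ hlam (by positivity)]
  rw [div_lt_iff₀ (by linarith)] at h
  linarith

theorem stmt19_general (k₂ : ℕ → ℕ)
    (hk₂range : ∀ n : ℕ, 2 ≤ n → 1 ≤ k₂ n ∧ k₂ n < n)
    (c : ℝ) (hc : c < 1)
    (hlimsup : Filter.limsup (fun n : ℕ => Real.log (k₂ n) / Real.log n) atTop = c)
    (ι : ℝ) (hι : 1 < ι)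
    (k₀ : ℕ → ℕ)
    (hk₀ : ∀ n : ℕ, k₀ n = ⌊((k₂ n : ℝ) / n) ^ (ι ^ (-2 : ℝ)) * n⌋₊)
    (y : ℕ → ℝ) (hy : ∀ n : ℕ, y n = Real.log ((n : ℝ) / k₀ n)) :
    Filter.liminf (fun n : ℕ => y n / Real.log n) atTop = (1 - c) * ι ^ (-2 : ℝ) ∧
    0 < (1 - c) * ι ^ (-2 : ℝ) ∧
    ∀ T : ℝ, 1 ≤ T → ∀ lam : ℝ, T * ι ^ (2 : ℕ) / (1 - c) < lam →
      ∀ᶠ n : ℕ in atTop,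
        Set.Icc (T⁻¹ * Real.log n) (T * Real.log n) ⊆
          Set.Icc (y n / lam) (y n * lam) := by
  set a : ℝ := ι ^ (-2 : ℝ)
  have ha₀ : 0 < a := by positivity
  have ha₁ : a ≤ 1 := rpow_le_one_of_one_le_of_nonpos hι.le (by norm_num)
  have hk₂ : ∀ᶠ n in atTop, 1 ≤ k₂ n ∧ k₂ n ≤ n :=
    eventually_atTop.2 ⟨2, fun n hn => (hk₂range n hn).imp_right le_of_lt⟩
  have hy_mem : ∀ᶠ n : ℕ in atTop, y n ∈ Icc 0 (log n) := hk₂.mono fun n hn => by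
    rw [hy, hk₀]
    exact log_div_floor_rpow_mul_mem_Icc (by exact_mod_cast hn.1) (by exact_mod_cast hn.2)
      ha₀.le ha₁
  have hu : ∀ᶠ n in atTop, log (k₂ n) / log n ∈ Icc 0 1 := hk₂.mono fun n hn =>
    log_div_log_mem_Icc (by exact_mod_cast hn.1) (by exact_mod_cast hn.2)
  have hliminf : liminf (fun n => y n / log n) atTop = (1 - c) * a := by
    rw [mul_comm, ← hlimsup]
    refine liminf_eq_mul_one_sub_limsup ha₀.le (isBoundedUnder_of_eventually_ge
      (hu.mono fun _ h => h.1)) (isBoundedUnder_of_eventually_le (hu.mono fun _ h => h.2)) ?_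
    simpa only [hy, hk₀] using tendsto_log_div_floor_div_log_sub hk₂ ha₁
  have hc₀ : 0 ≤ c := hlimsup ▸ le_limsup_of_frequently_le (hu.mono fun _ h => h.1).frequently
    (isBoundedUnder_of_eventually_le (hu.mono fun _ h => h.2))
  refine ⟨hliminf, mul_pos (sub_pos.2 hc) ha₀, fun T hT lam hlam => ?_⟩
  have hlam₀ : 0 < lam := lt_of_le_of_lt (div_nonneg (by positivity) (by linarith)) hlam
  have hTlam : T / lam < (1 - c) * a := div_lt_one_sub_mul_rpow_neg_two hc (by linarith) hlam₀ hlam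
  have hT_le : T ≤ lam :=
    ((div_lt_one hlam₀).1 (hTlam.trans_le (mul_le_one₀ (by linarith) ha₀.le ha₁))).le
  have hbdd : IsBoundedUnder (· ≥ ·) atTop fun n => y n / log n :=
    isBoundedUnder_of_eventually_ge (hy_mem.mono fun n h => div_nonneg h.1 (log_natCast_nonneg n))
  filter_upwards [eventually_lt_of_lt_liminf (hliminf ▸ hTlam) hbdd, hy_mem,
    eventually_gt_atTop 1] with n hn hyn hn₁
  exact Icc_inv_mul_subset_Icc_div_mul (log_pos (by exact_mod_cast hn₁)) hyn.2 (by linarith)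
    hT_le hn

theorem stmt19 (k₂ : ℕ → ℕ) (hk₂mono : Monotone k₂)
    (hk₂range : ∀ n : ℕ, 2 ≤ n → 1 ≤ k₂ n ∧ k₂ n < n)
    (c : ℝ) (hc : c < 1)
    (hlimsup : Filter.limsup (fun n : ℕ => Real.log (k₂ n) / Real.log n) atTop = c)
    (hk₂n : Tendsto (fun n : ℕ => (k₂ n : ℝ) / n) atTop (nhds 0))
    (ι : ℝ) (hι : 1 < ι)
    (k₀ k₁ : ℕ → ℕ)
    (hk₀ : ∀ n : ℕ, k₀ n = ⌊((k₂ n : ℝ) / n) ^ (ι ^ (-2 : ℝ)) * n⌋₊)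
    (hk₁ : ∀ n : ℕ, k₁ n = ⌊((k₂ n : ℝ) / n) ^ (ι ^ (-1 : ℝ)) * n⌋₊)
    (y : ℕ → ℝ) (hy : ∀ n : ℕ, y n = Real.log ((n : ℝ) / k₀ n)) :
    Filter.liminf (fun n : ℕ => y n / Real.log n) atTop = (1 - c) * ι ^ (-2 : ℝ) ∧
    0 < (1 - c) * ι ^ (-2 : ℝ) ∧
    ∀ T : ℝ, 1 ≤ T → ∀ lam : ℝ, T * ι ^ (2 : ℕ) / (1 - c) < lam →
      ∀ᶠ n : ℕ in atTop,
        Set.Icc (T⁻¹ * Real.log n) (T * Real.log n) ⊆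
          Set.Icc (y n / lam) (y n * lam) :=
  stmt19_general k₂ hk₂range c hc hlimsup ι hι k₀ hk₀ y hy
end
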